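/- arXiv:2505.19499 — 6 statements merged into one kernel-verified Lean document; each statement's English description precedes it below -/
import Mathlib

section
/- Let (V; f, g) be a dual-modular instance and for nonempty S ⊆ V define the density ρ(S) = f(S)/g(S). If A and B are both densest subsets (nonempty subsets maximizing ρ over all nonempty subsets of V), then A ∪ B is a densest subset, and if A ∩ B ≠ ∅ then A ∩ B is also a densest subset. -/
open Finset

variable {V : Type*} [Fintype V] [DecidableEq V]

/-- A set function is supermodular. -/
def Supermodular (f : Finset V → ℝ) : Prop :=
  ∀ A B : Finset V, f A + f B ≤ f (A ∩ B) + f (A ∪ B)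

/-- A set function is submodular. -/
def Submodular (g : Finset V → ℝ) : Prop :=
  ∀ A B : Finset V, g (A ∩ B) + g (A ∪ B) ≤ g A + g B

/-- A set function is monotone. -/
def MonotoneFn (f : Finset V → ℝ) : Prop :=
  ∀ A B : Finset V, A ⊆ B → f A ≤ f B

/-- A set function is strictly monotone. -/
def StrictMonoFn (g : Finset V → ℝ) : Prop :=
  ∀ A B : Finset V, A ⊂ B → g A < g B

/-- A dual-modular instance `(V; f, g)`: `f` is a nonnegative monotone supermodular
reward function, `g` is a nonnegative strictly monotone submodular cost function,
both vanishing on the empty set. -/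
structure DualModular (f g : Finset V → ℝ) : Prop where
  f_nonneg : ∀ A, 0 ≤ f A
  g_nonneg : ∀ A, 0 ≤ g A
  f_empty : f ∅ = 0
  g_empty : g ∅ = 0
  f_mono : MonotoneFn f
  g_strictMono : StrictMonoFn g
  f_supermodular : Supermodular f
  g_submodular : Submodular g

/-- Density of a subset. -/
noncomputable def density (f g : Finset V → ℝ) (S : Finset V) : ℝ := f S / g S

/-- Marginal contribution `h(S|A) = h(S ∪ A) - h(A)`. -/
def marginal (h : Finset V → ℝ) (S A : Finset V) : ℝ := h (S ∪ A) - h A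

/-- Marginal density `ρ(S|A) = f(S|A)/g(S|A)`. -/
noncomputable def margDensity (f g : Finset V → ℝ) (S A : Finset V) : ℝ :=
  marginal f S A / marginal g S A

/-- `S_{<i}`: the union of earlier parts in an indexed family. -/
def below {k : ℕ} (S : Fin k → Finset V) (i : Fin k) : Finset V :=
  (Finset.univ.filter (fun j => j < i)).biUnion S

/-- The density decomposition `V = S₁ ∪ … ∪ S_k`: each `S i` is a nonempty maximal
densest subset of the remaining instance with marginal functions. -/
structure IsDensityDecomposition (f g : Finset V → ℝ) {k : ℕ} (S : Fin k → Finset V) :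
    Prop where
  nonempty : ∀ i, (S i).Nonempty
  disj : ∀ i, Disjoint (S i) (below S i)
  cover : Finset.univ.biUnion S = (Finset.univ : Finset V)
  maxDensity : ∀ i, ∀ T : Finset V, T.Nonempty → Disjoint T (below S i) →
    margDensity f g T (below S i) ≤ margDensity f g (S i) (below S i)
  maximal : ∀ i, ∀ T : Finset V, T.Nonempty → Disjoint T (below S i) →
    margDensity f g (S i) (below S i) ≤ margDensity f g T (below S i) → T ⊆ S i

/-- `ρ_i`, the density of the `i`-th component of the decomposition. -/
noncomputable def decompDensity (f g : Finset V → ℝ) {k : ℕ} (S : Fin k → Finset V)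
    (i : Fin k) : ℝ :=
  margDensity f g (S i) (below S i)

/-- Membership in the base contrapolymatroid `B≥_f`. -/
def memBf (f : Finset V → ℝ) (x : V → ℝ) : Prop :=
  (∀ v, 0 ≤ x v) ∧ (∑ v, x v = f Finset.univ) ∧ ∀ A : Finset V, f A ≤ ∑ v ∈ A, x v

/-- Membership in the base polymatroid `B≤_g`. -/
def memBg (g : Finset V → ℝ) (y : V → ℝ) : Prop :=
  (∀ v, 0 ≤ y v) ∧ (∑ v, y v = g Finset.univ) ∧ ∀ A : Finset V, ∑ v ∈ A, y v ≤ g A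

/-- An allocation is a pair `(x, y) ∈ B≥_f × B≤_g`. -/
def Allocation (f g : Finset V → ℝ) (x y : V → ℝ) : Prop := memBf f x ∧ memBg g y

/-- The locally maximin condition for an allocation. -/
def LocallyMaximin (f g : Finset V → ℝ) (x y : V → ℝ) : Prop :=
  ∀ ρ : ℝ, 0 < ρ →
    (∑ v ∈ Finset.univ.filter (fun v => ρ ≤ x v / y v), x v
       = f (Finset.univ.filter (fun v => ρ ≤ x v / y v))) ∧
    (∑ v ∈ Finset.univ.filter (fun v => ρ ≤ x v / y v), y v
       = g (Finset.univ.filter (fun v => ρ ≤ x v / y v)))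

/-- The multiset of induced densities, sorted in non-increasing order. -/
noncomputable def sortedDensities (x y : V → ℝ) : List ℝ :=
  ((Finset.univ.val.map (fun v => x v / y v)).sort (· ≤ ·)).reverse

/-- An allocation is lexicographically optimal if its non-increasingly sorted density
vector is lexicographically minimal among all allocations. -/
def LexOptimal (f g : Finset V → ℝ) (x y : V → ℝ) : Prop :=
  Allocation f g x y ∧
  ∀ x' y' : V → ℝ, Allocation f g x' y' → sortedDensities x y ≤ sortedDensities x' y'

/-- The hockey-stick divergence `HS_γ(x ‖ y)`. -/
noncomputable def HS (γ : ℝ) (x y : V → ℝ) : ℝ := ∑ u, max (x u - γ * y u) 0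

/-- The `θ`-divergence `D_θ(x ‖ y) = Σ_u y_u · θ(x_u / y_u)`. -/
noncomputable def Dtheta (θ : ℝ → ℝ) (x y : V → ℝ) : ℝ := ∑ u, y u * θ (x u / y u)

/-- Permutations of `V`, encoded as bijections to positions `Fin |V|`;
`u ≺_σ v` iff `σ u < σ v`. -/
abbrev Perms (V : Type*) [Fintype V] := V ≃ Fin (Fintype.card V)

/-- `h^σ(u)`: the marginal contribution of `u` given the elements preceding it in `σ`. -/
def permVal (h : Finset V → ℝ) (σ : Perms V) (u : V) : ℝ :=
  h (insert u (Finset.univ.filter (fun w => σ w < σ u))) -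
    h (Finset.univ.filter (fun w => σ w < σ u))

/-- A probability distribution on permutations of `V`. -/
def IsDist (p : Perms V → ℝ) : Prop := (∀ σ, 0 ≤ p σ) ∧ ∑ σ, p σ = 1

/-- `h^p(u) = Σ_σ p_σ · h^σ(u)`. -/
noncomputable def distVal (h : Finset V → ℝ) (p : Perms V → ℝ) (u : V) : ℝ :=
  ∑ σ, p σ * permVal h σ u

/-- The density induced by a solution `(p, q)`. -/
noncomputable def solDensity (f g : Finset V → ℝ) (p q : Perms V → ℝ) (v : V) : ℝ :=
  distVal f p v / distVal g q v

/-- A solution `(p, q)` is locally maximin if whenever `u` has strictly larger induced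
density than `v`, every permutation with positive weight puts `u` before `v`. -/
def LocallyMaximinSol (f g : Finset V → ℝ) (p q : Perms V → ℝ) : Prop :=
  ∀ u v : V, solDensity f g p q v < solDensity f g p q u →
    ∀ σ : Perms V, (0 < p σ ∨ 0 < q σ) → σ u < σ v

/-- The convex-program objective `Φ_θ(p, q) = D_θ(f^p ‖ g^q)`. -/
noncomputable def Phi (θ : ℝ → ℝ) (f g : Finset V → ℝ) (p q : Perms V → ℝ) : ℝ :=
  Dtheta θ (distVal f p) (distVal g q)

/-! With `ρ` the maximal density, `S ↦ ρ g(S) - f(S)` is nonnegative (on `∅` because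
`f(∅) = g(∅) = 0`) and submodular, and the densest sets are exactly its nonempty zeros.
The zeros of a nonnegative submodular function are closed under union and intersection. -/

section

variable {α : Type*}

lemma StrictMonoFn.pos_of_nonempty {g : Finset α → ℝ} (hg : StrictMonoFn g) (h0 : g ∅ = 0)
    {S : Finset α} (hS : S.Nonempty) : 0 < g S :=
  h0 ▸ hg ∅ S (empty_ssubset.mpr hS)

lemma Submodular.const_mul_sub [DecidableEq α] {f g : Finset α → ℝ} (hg : Submodular g)
    (hf : Supermodular f) {ρ : ℝ} (hρ : 0 ≤ ρ) : Submodular (fun S => ρ * g S - f S) := by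
  intro A B
  linarith [mul_le_mul_of_nonneg_left (hg A B) hρ, hf A B]

lemma Submodular.union_inter_eq_zero [DecidableEq α] {h : Finset α → ℝ} (hh : Submodular h)
    (hnn : ∀ S, 0 ≤ h S) {A B : Finset α} (hA : h A = 0) (hB : h B = 0) :
    h (A ∪ B) = 0 ∧ h (A ∩ B) = 0 := by
  have := hh A B
  constructor <;> linarith [hnn (A ∪ B), hnn (A ∩ B)]

lemma density_le_iff {f g : Finset α → ℝ} {S : Finset α} {ρ : ℝ} (hS : 0 < g S) :
    density f g S ≤ ρ ↔ f S ≤ ρ * g S :=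
  div_le_iff₀ hS

lemma density_eq_iff {f g : Finset α → ℝ} {S : Finset α} {ρ : ℝ} (hS : 0 < g S) :
    density f g S = ρ ↔ ρ * g S - f S = 0 := by
  rw [density, div_eq_iff hS.ne', sub_eq_zero, eq_comm]

lemma DualModular.const_mul_sub_nonneg [DecidableEq α] {f g : Finset α → ℝ}
    (hdm : DualModular f g) {ρ : ℝ} (hmax : ∀ S : Finset α, S.Nonempty → density f g S ≤ ρ)
    (S : Finset α) : 0 ≤ ρ * g S - f S := by
  rcases S.eq_empty_or_nonempty with rfl | hS
  · simp [hdm.f_empty, hdm.g_empty]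
  · have hgS := hdm.g_strictMono.pos_of_nonempty hdm.g_empty hS
    linarith [(density_le_iff hgS).1 (hmax S hS)]

end

/-- if `A` and `B` are both densest subsets, then `A ∪ B` is densest,
and if `A ∩ B ≠ ∅` then `A ∩ B` is densest. -/
theorem densest_union_inter (f g : Finset V → ℝ) (hdm : DualModular f g)
    (A B : Finset V) (hA : A.Nonempty) (hB : B.Nonempty)
    (hAmax : ∀ S : Finset V, S.Nonempty → density f g S ≤ density f g A)
    (hBmax : ∀ S : Finset V, S.Nonempty → density f g S ≤ density f g B) :
    (∀ S : Finset V, S.Nonempty → density f g S ≤ density f g (A ∪ B)) ∧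
    ((A ∩ B).Nonempty →
      ∀ S : Finset V, S.Nonempty → density f g S ≤ density f g (A ∩ B)) := by
  have hg : ∀ S : Finset V, S.Nonempty → 0 < g S :=
    fun S hS => hdm.g_strictMono.pos_of_nonempty hdm.g_empty hS
  have hρ : 0 ≤ density f g A := div_nonneg (hdm.f_nonneg A) (hdm.g_nonneg A)
  have hslack := hdm.g_submodular.const_mul_sub hdm.f_supermodular hρ
  have hA0 : density f g A * g A - f A = 0 := (density_eq_iff (hg A hA)).1 rfl
  have hB0 : density f g A * g B - f B = 0 :=
    (density_eq_iff (hg B hB)).1 (le_antisymm (hAmax B hB) (hBmax A hA))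
  obtain ⟨hU0, hI0⟩ := hslack.union_inter_eq_zero (hdm.const_mul_sub_nonneg hAmax) hA0 hB0
  refine ⟨fun S hS => ?_, fun hI S hS => ?_⟩
  · rw [(density_eq_iff (hg _ (hA.mono subset_union_left))).2 hU0]
    exact hAmax S hS
  · rw [(density_eq_iff (hg _ hI)).2 hI0]
    exact hAmax S hS
end

section
/- In the density decomposition V = S₁ ∪ … ∪ S_k of a dual-modular instance (V; f, g), the component densities are strictly decreasing: ρ₁ > ρ₂ > … > ρ_k. -/
open Finset

variable {V : Type*} [Fintype V] [DecidableEq V]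

lemma below_succ_eq {k : ℕ} (S : Fin k → Finset V) (i : Fin k) (h : i.val + 1 < k) :
    below S ⟨i.val + 1, h⟩ = S i ∪ below S i := by
  have hfil : (Finset.univ.filter (fun j : Fin k => j < (⟨i.val + 1, h⟩ : Fin k)))
      = insert i (Finset.univ.filter (fun j => j < i)) := by
    ext j
    simp only [Finset.mem_filter, Finset.mem_univ, true_and, Finset.mem_insert,
      Fin.lt_def, Fin.ext_iff]
    omega
  rw [below, hfil, Finset.biUnion_insert]
  rfl

lemma key_step (f g : Finset V → ℝ) (hdm : DualModular f g) {k : ℕ} (S : Fin k → Finset V)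
    (hdec : IsDensityDecomposition f g S) (i : Fin k) (h : i.val + 1 < k) :
    decompDensity f g S ⟨i.val + 1, h⟩ < decompDensity f g S i := by
  set i1 : Fin k := ⟨i.val + 1, h⟩ with hi1
  set B : Finset V := below S i with hB
  have hB' : below S i1 = S i ∪ B := below_succ_eq S i h
  set a : ℝ := marginal f (S i) B
  set b : ℝ := marginal g (S i) B
  set c : ℝ := marginal f (S i1) (below S i1)
  set d : ℝ := marginal g (S i1) (below S i1)
  -- positivity of g-marginals
  have hb : 0 < b := by
    have hsub : B ⊂ S i ∪ B := by
      refine Finset.ssubset_iff_of_subset Finset.subset_union_right |>.2 ?_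
      obtain ⟨v, hv⟩ := hdec.nonempty i
      exact ⟨v, Finset.mem_union_left _ hv,
        Finset.disjoint_left.1 (hdec.disj i) hv⟩
    have := hdm.g_strictMono _ _ hsub
    simpa [b, marginal] using sub_pos.2 this
  have hd : 0 < d := by
    have hsub : below S i1 ⊂ S i1 ∪ below S i1 := by
      refine Finset.ssubset_iff_of_subset Finset.subset_union_right |>.2 ?_
      obtain ⟨v, hv⟩ := hdec.nonempty i1
      exact ⟨v, Finset.mem_union_left _ hv,
        Finset.disjoint_left.1 (hdec.disj i1) hv⟩
    have := hdm.g_strictMono _ _ hsub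
    simpa [d, marginal] using sub_pos.2 this
  by_contra hcon
  push_neg at hcon
  -- so ρ_i = a/b ≤ c/d = ρ_{i+1}
  have hle : a / b ≤ c / d := hcon
  -- telescoping marginals
  have htel : ∀ h' : Finset V → ℝ,
      marginal h' (S i ∪ S i1) B = marginal h' (S i) B + marginal h' (S i1) (below S i1) := by
    intro h'
    have hset : (S i ∪ S i1) ∪ B = S i1 ∪ (S i ∪ B) := by
      rw [Finset.union_comm (S i) (S i1), Finset.union_assoc]
    simp only [marginal, hset, hB']
    ring
  -- mediant inequality
  have hmed : a / b ≤ (a + c) / (b + d) := by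
    rw [div_le_div_iff₀ hb (by linarith)]
    have := (div_le_div_iff₀ hb hd).1 hle
    nlinarith
  -- apply maximality
  have hdisjT : Disjoint (S i ∪ S i1) B := by
    refine Finset.disjoint_union_left.2 ⟨hdec.disj i, ?_⟩
    have := hdec.disj i1
    rw [hB'] at this
    exact (Finset.disjoint_union_right.1 this).2
  have hne : (S i ∪ S i1).Nonempty := (hdec.nonempty i).mono Finset.subset_union_left
  have hmax := hdec.maximal i (S i ∪ S i1) hne hdisjT
  have hsub : S i ∪ S i1 ⊆ S i := by
    apply hmax
    simp only [margDensity, ← hB]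
    rw [htel f, htel g]
    exact hmed
  have hsub1 : S i1 ⊆ S i := fun v hv => hsub (Finset.mem_union_right _ hv)
  -- contradiction: S i1 is disjoint from S i
  have hdisj1 : Disjoint (S i1) (S i) := by
    have := hdec.disj i1
    rw [hB'] at this
    exact (Finset.disjoint_union_right.1 this).1
  obtain ⟨v, hv⟩ := hdec.nonempty i1
  exact Finset.disjoint_left.1 hdisj1 hv (hsub1 hv)

/-- the densities of the density decomposition are strictly decreasing. -/
theorem decomposition_densities_strictly_decreasing (f g : Finset V → ℝ)
    (hdm : DualModular f g) {k : ℕ} (S : Fin k → Finset V)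
    (hdec : IsDensityDecomposition f g S) :
    ∀ i j : Fin k, i < j → decompDensity f g S j < decompDensity f g S i := by
  have main : ∀ n : ℕ, ∀ i j : Fin k, j.val = i.val + n + 1 →
      decompDensity f g S j < decompDensity f g S i := by
    intro n
    induction n with
    | zero =>
      intro i j hj
      have h : i.val + 1 < k := by omega
      have : j = ⟨i.val + 1, h⟩ := Fin.ext (by simpa using hj)
      rw [this]
      exact key_step f g hdm S hdec i h
    | succ n ih =>
      intro i j hj
      have h : i.val + 1 < k := by omega
      have h1 := key_step f g hdm S hdec i h
      have h2 := ih ⟨i.val + 1, h⟩ j (by simpa using by omega)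
      linarith
  intro i j hij
  have : j.val = i.val + (j.val - i.val - 1) + 1 := by
    have := Fin.lt_def.1 hij
    omega
  exact main _ i j this
end

section
/- Let V be a finite set, f : 2^V → ℝ≥0 monotone with f(∅) = 0, and g : 2^V → ℝ≥0 strictly monotone with g(∅) = 0. Suppose at least one locally maximin allocation exists. Then an allocation is lexicographically optimal if and only if it is locally maximin; moreover, any two such allocations induce the same density vector (x_v/y_v)_{v∈V}. -/
open Finset

variable {V : Type*} [Fintype V] [DecidableEq V]

/-!
Fix a locally maximin allocation `(x, y)` and any allocation `(x', y')`, and walk down the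
density levels `ρ` of `(x, y)`. Every super-level set `S` of `(x, y)` is tight, so
`x'(S) ≥ f(S) = x(S)` and `y'(S) ≤ g(S) = y(S)`. Suppose the two allocations agree (densities
and masses) on the levels above `ρ`. Either `(x', y')` has a density above `ρ` at a vertex not
yet matched, and then its sorted density vector is lexicographically larger; or all its
remaining densities are at most `ρ`, and the mass inequalities force density exactly `ρ` and
equal masses on the next level. So a locally maximin allocation lies lexicographically below
every allocation, strictly unless both have the same densities and the other one is locally
maximin as well.
-/

theorem List.lt_of_count_eq_above_of_count_lt {α : Type*} [LinearOrder α] {μ : α} :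
    ∀ {l l' : List α}, l.Pairwise (· ≥ ·) → l'.Pairwise (· ≥ ·) →
      (∀ a, μ < a → l.count a = l'.count a) → l.count μ < l'.count μ → l < l'
  | _, [], _, _, _, hμ => by simp at hμ
  | [], _ :: _, _, _, _, _ => List.Lex.nil
  | a :: l, b :: l', hl, hl', habove, hμ => by
    rcases lt_trichotomy a b with hab | rfl | hba
    · exact List.Lex.rel hab
    · refine List.Lex.cons (lt_of_count_eq_above_of_count_lt (μ := μ) hl.of_cons hl'.of_cons
        (fun c hc => ?_) ?_)
      · have := habove c hc
        simp only [List.count_cons] at this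
        omega
      · simp only [List.count_cons] at hμ
        omega
    · exfalso
      by_cases haμ : μ < a
      · have ha : a ∈ b :: l' := List.count_pos_iff.mp
          (habove a haμ ▸ List.count_pos_iff.mpr List.mem_cons_self)
        rcases List.mem_cons.mp ha with rfl | ha
        · exact lt_irrefl _ hba
        · exact (List.rel_of_pairwise_cons hl' ha).not_gt hba
      · have hb : b < μ := hba.trans_le (not_lt.mp haμ)
        have : (b :: l').count μ = 0 := List.count_eq_zero.mpr fun hmem => by
          rcases List.mem_cons.mp hmem with rfl | hmem
          · exact lt_irrefl _ hb
          · exact (List.rel_of_pairwise_cons hl' hmem).not_gt hb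
        omega

omit [DecidableEq V] in
theorem pairwise_sortedDensities (x y : V → ℝ) : (sortedDensities x y).Pairwise (· ≥ ·) :=
  List.pairwise_reverse.mpr (Multiset.pairwise_sort _ _)

omit [DecidableEq V] in
theorem count_sortedDensities (x y : V → ℝ) (a : ℝ) :
    (sortedDensities x y).count a = #{v | x v / y v = a} := by
  rw [sortedDensities, List.count_reverse, ← Multiset.coe_count, Multiset.sort_eq,
    Multiset.count_map, Finset.card_def, Finset.filter_val]
  simp only [eq_comm]

theorem sortedDensities_lt_of_eqOn {x y x' y' : V → ℝ} {W : Finset V} {μ : ℝ}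
    (hW : ∀ v ∈ W, x v / y v = x' v / y' v) (hlt : ∀ v ∉ W, x v / y v < μ)
    (hle : ∀ v ∉ W, x' v / y' v ≤ μ) {u : V} (hu : u ∉ W) (hμ : x' u / y' u = μ) :
    sortedDensities x y < sortedDensities x' y' := by
  refine List.lt_of_count_eq_above_of_count_lt (μ := μ) (pairwise_sortedDensities x y)
    (pairwise_sortedDensities x' y') (fun a ha => ?_) ?_
  · rw [count_sortedDensities, count_sortedDensities]
    congr 1
    refine Finset.filter_congr fun v _ => ?_
    by_cases hv : v ∈ W
    · rw [hW v hv]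
    · constructor <;> intro h
      · exact absurd (hlt v hv) (by linarith)
      · exact absurd (hle v hv) (by linarith)
  · rw [count_sortedDensities, count_sortedDensities]
    refine Finset.card_lt_card ⟨fun v hv => ?_, fun hsub => ?_⟩
    · simp only [Finset.mem_filter, Finset.mem_univ, true_and] at hv ⊢
      by_cases hvW : v ∈ W
      · rw [← hW v hvW, hv]
      · exact absurd (hlt v hvW) (by linarith)
    · have := hsub (Finset.mem_filter.mpr ⟨Finset.mem_univ u, hμ⟩)
      simp only [Finset.mem_filter, Finset.mem_univ, true_and] at this
      exact absurd (hlt u hu) (by linarith)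

section Allocations

variable {f g : Finset V → ℝ} {x y x' y' : V → ℝ}

noncomputable def superLevel (x y : V → ℝ) (ρ : ℝ) : Finset V := {v | ρ ≤ x v / y v}

omit [DecidableEq V] in
theorem superLevel_anti {ρ σ : ℝ} (h : ρ ≤ σ) : superLevel x y σ ⊆ superLevel x y ρ :=
  fun v hv => by
  simp only [superLevel, mem_filter] at hv ⊢
  exact ⟨hv.1, h.trans hv.2⟩

omit [DecidableEq V] in
theorem superLevel_eq_univ (hx : ∀ v, 0 ≤ x v) (hy : ∀ v, 0 ≤ y v) {ρ : ℝ} (hρ : ρ ≤ 0) :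
    superLevel x y ρ = univ :=
  Finset.filter_true_of_mem fun v _ => hρ.trans (div_nonneg (hx v) (hy v))

theorem memBg.pos (hg : StrictMonoFn g) (hy : memBg g y) (v : V) : 0 < y v := by
  obtain ⟨-, hsum, hle⟩ := hy
  have hrest : ∑ u ∈ univ.erase v, y u < g univ :=
    (hle _).trans_lt (hg _ _ (Finset.erase_ssubset (mem_univ v)))
  linarith [Finset.add_sum_erase univ y (mem_univ v)]

omit [DecidableEq V] in
theorem LocallyMaximin.sum_superLevel (hm : LocallyMaximin f g x y) (hA : Allocation f g x y)
    (ρ : ℝ) :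
    ∑ v ∈ superLevel x y ρ, x v = f (superLevel x y ρ) ∧
      ∑ v ∈ superLevel x y ρ, y v = g (superLevel x y ρ) := by
  rcases le_or_gt ρ 0 with hρ | hρ
  · rw [superLevel_eq_univ hA.1.1 hA.2.1 hρ]
    exact ⟨hA.1.2.1, hA.2.2.1⟩
  · exact hm ρ hρ

def AgreeOn (x y x' y' : V → ℝ) (S : Finset V) : Prop :=
  (∀ v ∈ S, x v / y v = x' v / y' v) ∧
    ∑ v ∈ S, x' v = ∑ v ∈ S, x v ∧ ∑ v ∈ S, y' v = ∑ v ∈ S, y v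

theorem AgreeOn.superLevel_of_density_le (hg : StrictMonoFn g) (hA : Allocation f g x y)
    (hm : LocallyMaximin f g x y) (hA' : Allocation f g x' y') {W : Finset V}
    (hW : AgreeOn x y x' y' W) {ρ : ℝ} (hρ : 0 ≤ ρ) (hWS : W ⊆ superLevel x y ρ)
    (hlevel : ∀ v ∈ superLevel x y ρ \ W, x v / y v = ρ)
    (hle : ∀ v ∈ superLevel x y ρ \ W, x' v / y' v ≤ ρ) :
    AgreeOn x y x' y' (superLevel x y ρ) := by
  set S := superLevel x y ρ
  have hy (v : V) : 0 < y v := hA.2.pos hg v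
  have hy' (v : V) : 0 < y' v := hA'.2.pos hg v
  obtain ⟨hxS, hyS⟩ := hm.sum_superLevel hA ρ
  have hxS' : ∑ v ∈ S, x v ≤ ∑ v ∈ S, x' v := hxS ▸ hA'.1.2.2 S
  have hyS' : ∑ v ∈ S, y' v ≤ ∑ v ∈ S, y v := hyS ▸ hA'.2.2.2 S
  have hx_level : ∑ v ∈ S \ W, x v = ρ * ∑ v ∈ S \ W, y v := by
    rw [mul_sum]
    exact sum_congr rfl fun v hv => by rw [← hlevel v hv, div_mul_cancel₀ _ (hy v).ne']
  have hterm : ∀ v ∈ S \ W, x' v - ρ * y' v ≤ 0 := fun v hv => by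
    have := hle v hv
    rw [div_le_iff₀ (hy' v)] at this
    linarith
  obtain ⟨hdW, hxW, hyW⟩ := hW
  -- On `S \ W` the pair `(x', y')` has density at most `ρ`, but no less mass than `(x, y)`.
  have hexcess : ∑ v ∈ S \ W, (x' v - ρ * y' v) =
      (∑ v ∈ S, x' v - ∑ v ∈ S, x v) + ρ * (∑ v ∈ S, y v - ∑ v ∈ S, y' v) := by
    rw [sum_sub_distrib, ← mul_sum, sum_sdiff_eq_sub hWS, sum_sdiff_eq_sub hWS, hxW, hyW]
    rw [sum_sdiff_eq_sub hWS, sum_sdiff_eq_sub hWS] at hx_level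
    linarith
  have hgain_x : 0 ≤ ∑ v ∈ S, x' v - ∑ v ∈ S, x v := by linarith
  have hgain_y : 0 ≤ ρ * (∑ v ∈ S, y v - ∑ v ∈ S, y' v) := mul_nonneg hρ (by linarith)
  have hzero : ∑ v ∈ S \ W, (x' v - ρ * y' v) = 0 := by linarith [sum_nonpos hterm]
  refine ⟨fun v hv => ?_, by linarith [sum_nonpos hterm], ?_⟩
  · by_cases hvW : v ∈ W
    · exact hdW v hvW
    · have hv : v ∈ S \ W := mem_sdiff.mpr ⟨hv, hvW⟩
      have := (sum_eq_zero_iff_of_nonpos hterm).mp hzero v hv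
      rw [hlevel v hv, eq_comm, div_eq_iff (hy' v).ne']
      linarith
  · rcases hρ.eq_or_lt with rfl | hρ
    · rw [show S = univ from superLevel_eq_univ hA.1.1 hA.2.1 le_rfl, hA.2.2.1, hA'.2.2.1]
    · have hy_gain : ρ * (∑ v ∈ S, y v - ∑ v ∈ S, y' v) = 0 := by linarith
      linarith [(mul_eq_zero.mp hy_gain).resolve_left hρ.ne']

theorem LocallyMaximin.lt_or_agreeOn_superLevel (hm : LocallyMaximin f g x y)
    (hg : StrictMonoFn g) (hA : Allocation f g x y) (hA' : Allocation f g x' y') (σ : ℝ)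
    (hσ : ∀ τ, superLevel x y τ ⊆ superLevel x y σ → AgreeOn x y x' y' (superLevel x y τ)) :
    sortedDensities x y < sortedDensities x' y' ∨ ∀ τ, AgreeOn x y x' y' (superLevel x y τ) := by
  set W := superLevel x y σ
  by_cases hWuniv : W = univ
  · exact .inr fun τ => hσ τ (hWuniv ▸ subset_univ _)
  have hne : (univ \ W).Nonempty := sdiff_nonempty.mpr fun h => hWuniv (univ_subset_iff.mp h)
  obtain ⟨u₀, hu₀, hmax⟩ := exists_max_image (univ \ W) (fun v => x v / y v) hne
  set ρ := x u₀ / y u₀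
  have hout : ∀ v ∉ W, x v / y v ≤ ρ := fun v hv => hmax v (by simpa using hv)
  have hu₀W : u₀ ∉ W := (mem_sdiff.mp hu₀).2
  have hρσ : ρ < σ := by simpa [W, superLevel] using hu₀W
  have hWS : W ⊆ superLevel x y ρ := superLevel_anti hρσ.le
  have hu₀S : u₀ ∈ superLevel x y ρ := by simp [superLevel, ρ]
  have hlevel : ∀ v ∈ superLevel x y ρ \ W, x v / y v = ρ := fun v hv =>
    le_antisymm (hout v (mem_sdiff.mp hv).2) (by simpa [superLevel] using (mem_sdiff.mp hv).1)
  have hWagree := hσ σ subset_rfl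
  by_cases hbig : ∃ u ∉ W, ρ < x' u / y' u
  · obtain ⟨u₁, hu₁, hmax₁⟩ := exists_max_image (univ \ W) (fun v => x' v / y' v) hne
    obtain ⟨u, huW, hu⟩ := hbig
    have hmax' : ∀ v ∉ W, x' v / y' v ≤ x' u₁ / y' u₁ := fun v hv => hmax₁ v (by simpa using hv)
    exact .inl <| sortedDensities_lt_of_eqOn hWagree.1
      (fun v hv => (hout v hv).trans_lt (hu.trans_le (hmax' u huW))) hmax' (mem_sdiff.mp hu₁).2 rfl
  push Not at hbig
  have hS := hWagree.superLevel_of_density_le hg hA hm hA'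
    (div_nonneg (hA.1.1 u₀) (hA.2.1 u₀)) hWS hlevel fun v hv => hbig v (mem_sdiff.mp hv).2
  refine hm.lt_or_agreeOn_superLevel hg hA hA' ρ fun τ hτ => ?_
  by_cases hτW : superLevel x y τ ⊆ W
  · exact hσ τ hτW
  · obtain ⟨v, hvτ, hvW⟩ := not_subset.mp hτW
    have hτρ : τ ≤ ρ := le_trans (by simpa [superLevel] using hvτ) (hout v hvW)
    rwa [subset_antisymm hτ (superLevel_anti hτρ)]
termination_by #(univ \ superLevel x y σ)
decreasing_by
  exact card_lt_card ⟨sdiff_subset_sdiff subset_rfl hWS, fun h =>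
    (mem_sdiff.mp (h hu₀)).2 hu₀S⟩

theorem LocallyMaximin.sortedDensities_lt_or_eq (hm : LocallyMaximin f g x y)
    (hg : StrictMonoFn g) (hA : Allocation f g x y) (hA' : Allocation f g x' y') :
    sortedDensities x y < sortedDensities x' y' ∨
      (∀ v, x v / y v = x' v / y' v) ∧ LocallyMaximin f g x' y' := by
  obtain ⟨M, hM⟩ := (Set.finite_range fun v => x v / y v).bddAbove
  have hempty : superLevel x y (M + 1) = ∅ := filter_eq_empty_iff.mpr fun v _ h =>
    by linarith [hM (Set.mem_range_self v)]
  refine (hm.lt_or_agreeOn_superLevel hg hA hA' (M + 1) fun τ hτ => ?_).imp_right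
    fun hagree => ?_
  · rw [hempty, subset_empty] at hτ
    simp [hτ, AgreeOn]
  have hd (v : V) : x v / y v = x' v / y' v :=
    (hagree 0).1 v (by simp [superLevel_eq_univ hA.1.1 hA.2.1 le_rfl])
  refine ⟨hd, fun ρ hρ => ?_⟩
  have hlevel : univ.filter (fun v => ρ ≤ x' v / y' v) = superLevel x y ρ :=
    filter_congr fun v _ => by rw [hd]
  rw [hlevel, (hagree ρ).2.1, (hagree ρ).2.2]
  exact hm ρ hρ

end Allocations

theorem lex_optimal_iff_locally_maximin_general (f g : Finset V → ℝ)
    (hgsm : StrictMonoFn g)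
    (hex : ∃ x y : V → ℝ, Allocation f g x y ∧ LocallyMaximin f g x y) :
    (∀ x y : V → ℝ, Allocation f g x y →
      (LexOptimal f g x y ↔ LocallyMaximin f g x y)) ∧
    (∀ x y x' y' : V → ℝ, Allocation f g x y → Allocation f g x' y' →
      LocallyMaximin f g x y → LocallyMaximin f g x' y' →
      ∀ v : V, x v / y v = x' v / y' v) := by
  obtain ⟨x₀, y₀, hA₀, hm₀⟩ := hex
  refine ⟨fun x y hA => ⟨fun hlex => ?_, fun hm => ⟨hA, fun x' y' hA' => ?_⟩⟩,
    fun x y x' y' hA hA' hm hm' => ?_⟩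
  · rcases hm₀.sortedDensities_lt_or_eq hgsm hA₀ hA with hlt | ⟨-, hm⟩
    · exact absurd (hlex.2 x₀ y₀ hA₀) hlt.not_ge
    · exact hm
  · rcases hm.sortedDensities_lt_or_eq hgsm hA hA' with hlt | ⟨hd, -⟩
    · exact hlt.le
    · simp only [sortedDensities, hd, le_rfl]
  · rcases hm.sortedDensities_lt_or_eq hgsm hA hA' with hlt | ⟨hd, -⟩
    · rcases hm'.sortedDensities_lt_or_eq hgsm hA' hA with hlt' | ⟨hd', -⟩
      · exact absurd hlt hlt'.asymm
      · exact fun v => (hd' v).symm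
    · exact hd

/-- if a locally maximin allocation exists, then an allocation is
lexicographically optimal iff it is locally maximin, and any two such allocations
induce the same density vector. -/
theorem lex_optimal_iff_locally_maximin (f g : Finset V → ℝ)
    (hf0 : f ∅ = 0) (hfnn : ∀ A, 0 ≤ f A) (hfmono : MonotoneFn f)
    (hg0 : g ∅ = 0) (hgnn : ∀ A, 0 ≤ g A) (hgsm : StrictMonoFn g)
    (hex : ∃ x y : V → ℝ, Allocation f g x y ∧ LocallyMaximin f g x y) :
    (∀ x y : V → ℝ, Allocation f g x y →
      (LexOptimal f g x y ↔ LocallyMaximin f g x y)) ∧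
    (∀ x y x' y' : V → ℝ, Allocation f g x y → Allocation f g x' y' →
      LocallyMaximin f g x y → LocallyMaximin f g x' y' →
      ∀ v : V, x v / y v = x' v / y' v) :=
  lex_optimal_iff_locally_maximin_general f g hgsm hex
end

section
/- Let (V; f, g) be a dual-modular instance with density vector ρ* from the density decomposition. For an allocation (x, y) ∈ B≥_f × B≤_g the following are equivalent: (i) for all v ∈ V the induced density x_v/y_v equals ρ*_v; (ii) (x, y) is lexicographically optimal; (iii) (x, y) is locally maximin. -/
open Finset

variable {V : Type*} [Fintype V] [DecidableEq V]

/-!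
Walk along the blocks `S₁, S₂, …` of the decomposition. While an allocation induces `ρ*` on
`S_{<i}` and `S_{<i}` is tight for both `x` and `y`, the inequalities
`x(S_i) ≥ f(S_i | S_{<i}) = ρ_i g(S_i | S_{<i}) ≥ ρ_i y(S_i)` show that the largest density `μ`
outside `S_{<i}` is at least `ρ_i`; if every maximiser `w` has `ρ*_w = μ`, then `μ = ρ_i`, the
maximisers are exactly `S_i`, and `S_{≤i}` is tight again. At the first block where this fails,
some maximiser has `ρ*_w ≠ μ`. Compared with `ρ*`, the induced densities then agree above `μ`
and take the value `μ` more often, so `ρ*` is lexicographically smaller: (i) ⇒ (ii). For a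
locally maximin allocation the level set at `μ` is tight, so the maximisers have marginal
density `μ` over `S_{<i}`; the maximality of `S_i` rules this out: (iii) ⇒ (i).

For (ii) ⇒ (iii): the tight sets of `x` (and of `y`) form a lattice. So if a level set
`S^(ρ)` is not tight, some `u ∈ S^(ρ)` and `v ∉ S^(ρ)` are separated by no tight set. Moving a
little of `x` from `u` to `v`, or of `y` from `v` to `u`, then gives another allocation with a
lexicographically smaller density vector.
-/

theorem Multiset.sort_le_reverse {α : Type*} [LinearOrder α] (s : Multiset α) :
    (s.sort (· ≤ ·)).reverse = s.sort (· ≥ ·) := by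
  refine List.Perm.eq_of_pairwise' (r := (· ≥ ·)) ?_ (s.pairwise_sort _) ?_
  · exact List.pairwise_reverse.2 (s.pairwise_sort _)
  · rw [← Multiset.coe_eq_coe, Multiset.coe_reverse, Multiset.sort_eq, Multiset.sort_eq]

theorem Multiset.exists_eq_cons_sort_ge {α : Type*} [LinearOrder α] {s : Multiset α}
    (hs : s ≠ 0) :
    ∃ a s', s = a ::ₘ s' ∧ (∀ c ∈ s', c ≤ a) ∧ s.sort (· ≥ ·) = a :: s'.sort (· ≥ ·) := by
  obtain ⟨a, ha, hmax⟩ := s.exists_max_image id hs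
  obtain ⟨s', rfl⟩ := Multiset.exists_cons_of_mem ha
  have hle : ∀ c ∈ s', c ≤ a := fun c hc => hmax c (Multiset.mem_cons_of_mem hc)
  exact ⟨a, s', rfl, hle, Multiset.sort_cons _ _ _ hle⟩

theorem Multiset.lex_sort_ge_of_count_lt {α : Type*} [LinearOrder α] {θ : α}
    {A B : Multiset α} (hgt : A.filter (θ < ·) = B.filter (θ < ·))
    (hθ : A.count θ < B.count θ) :
    List.Lex (· < ·) (A.sort (· ≥ ·)) (B.sort (· ≥ ·)) := by
  induction B using Multiset.strongInductionOn generalizing A with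
  | ih B ih =>
  obtain ⟨b, B', rfl, hb, hsortB⟩ :=
    Multiset.exists_eq_cons_sort_ge (s := B) (by rintro rfl; simp at hθ)
  rcases eq_or_ne A 0 with rfl | hA
  · rw [Multiset.sort_zero, hsortB]
    exact List.Lex.nil
  obtain ⟨a, A', rfl, -, hsortA⟩ := Multiset.exists_eq_cons_sort_ge hA
  rw [hsortA, hsortB]
  have hmax : ∀ c ∈ b ::ₘ B', c ≤ b := fun c hc =>
    (Multiset.mem_cons.1 hc).elim le_of_eq (hb c)
  have hθb : θ ≤ b := hmax θ (Multiset.count_pos.1 (by omega))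
  have hab : a ≤ b := by
    by_contra! hba
    have ha : a ∈ (a ::ₘ A').filter (θ < ·) :=
      Multiset.mem_filter.2 ⟨Multiset.mem_cons_self _ _, hθb.trans_lt hba⟩
    rw [hgt] at ha
    exact hba.not_ge (hmax a (Multiset.mem_of_mem_filter ha))
  obtain hab | rfl := hab.lt_or_eq
  · exact List.Lex.rel hab
  · refine List.Lex.cons (ih B' (Multiset.lt_cons_self B' a) ?_ ?_)
    · simpa [Multiset.filter_cons] using hgt
    · simpa [Multiset.count_cons] using hθ

section SortedDensities

variable {ι : Type*} [Fintype ι]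

theorem sortedDensities_eq_sort_ge (x y : ι → ℝ) :
    sortedDensities x y = (univ.val.map fun v => x v / y v).sort (· ≥ ·) :=
  Multiset.sort_le_reverse _

theorem sortedDensities_lt_of_ssubset {x y x' y' : ι → ℝ} (θ : ℝ)
    (hgt : ∀ v, θ < x v / y v ∨ θ < x' v / y' v → x v / y v = x' v / y' v)
    (hθ : univ.filter (fun v => θ = x v / y v) ⊂ univ.filter (fun v => θ = x' v / y' v)) :
    sortedDensities x y < sortedDensities x' y' := by
  rw [sortedDensities_eq_sort_ge, sortedDensities_eq_sort_ge]
  apply Multiset.lex_sort_ge_of_count_lt (θ := θ)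
  · rw [Multiset.filter_map, Multiset.filter_map]
    have hiff : ∀ v ∈ univ.val, θ < x v / y v ↔ θ < x' v / y' v := fun v _ =>
      ⟨fun h => hgt v (Or.inl h) ▸ h, fun h => (hgt v (Or.inr h)).symm ▸ h⟩
    exact Multiset.map_congr (Multiset.filter_congr hiff) fun v hv =>
      hgt v (Or.inr (Multiset.mem_filter.1 hv).2)
  · rw [Multiset.count_map, Multiset.count_map, ← Finset.filter_val, ← Finset.filter_val]
    exact Finset.card_lt_card hθ

theorem sortedDensities_lt_of_pair {x y x' y' : ι → ℝ} {u v : ι}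
    (hrest : ∀ w, w ≠ u → w ≠ v → x' w / y' w = x w / y w)
    (hu : x' u / y' u < x u / y u) (hv : x v / y v < x u / y u)
    (hv' : x' v / y' v < x u / y u) :
    sortedDensities x' y' < sortedDensities x y := by
  have hne : ∀ w, x u / y u ≤ x' w / y' w ∨ x u / y u < x w / y w → w ≠ u ∧ w ≠ v := by
    rintro w hw
    refine ⟨?_, ?_⟩ <;> rintro rfl <;> rcases hw with hw | hw <;> linarith
  refine sortedDensities_lt_of_ssubset (x u / y u) (fun w hw => ?_) ?_
  · have := hne w (hw.imp le_of_lt id)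
    exact hrest w this.1 this.2
  · refine Finset.ssubset_iff_of_subset (fun w hw => ?_) |>.2 ⟨u, by simp, by simp [hu.ne']⟩
    simp only [Finset.mem_filter, Finset.mem_univ, true_and] at hw ⊢
    have := hne w (Or.inl hw.le)
    rw [hw, hrest w this.1 this.2]

end SortedDensities

theorem exists_pos_add_le {ι : Type*} [Finite ι] {p : ι → Prop} {a b : ι → ℝ}
    (h : ∀ i, p i → a i < b i) : ∃ ε > 0, ∀ i, p i → a i + ε ≤ b i := by
  classical
  have := Fintype.ofFinite ι
  by_cases hs : (univ.filter p).Nonempty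
  · obtain ⟨i₀, hi₀, hmin⟩ := (univ.filter p).exists_min_image (fun i => b i - a i) hs
    simp only [Finset.mem_filter, Finset.mem_univ, true_and] at hi₀ hmin
    exact ⟨b i₀ - a i₀, by linarith [h i₀ hi₀], fun i hi => by linarith [hmin i hi]⟩
  · exact ⟨1, one_pos, fun i hi => absurd ⟨i, by simpa using hi⟩ hs⟩

section SetFunctions

variable {α : Type*} [DecidableEq α]

theorem Finset.separating_induction [Fintype α]
    {P : Finset α → Prop} (hbot : P ∅) (htop : P univ)
    (hunion : ∀ A B, P A → P B → P (A ∪ B)) (hinter : ∀ A B, P A → P B → P (A ∩ B))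
    {T : Finset α} (hsep : ∀ u ∈ T, ∀ v ∉ T, ∃ A, P A ∧ u ∈ A ∧ v ∉ A) : P T := by
  have : ∀ u v, ∃ A, P A ∧ (u ∈ T → v ∉ T → u ∈ A ∧ v ∉ A) := fun u v => by
    by_cases h : u ∈ T ∧ v ∉ T
    · obtain ⟨A, hA, huA, hvA⟩ := hsep u h.1 v h.2
      exact ⟨A, hA, fun _ _ => ⟨huA, hvA⟩⟩
    · exact ⟨univ, htop, fun hu hv => absurd ⟨hu, hv⟩ h⟩
  choose A hA hsepA using this
  have hT : T = T.sup fun u => Tᶜ.inf (A u) := by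
    ext w
    simp only [Finset.mem_sup, Finset.mem_inf, Finset.mem_compl]
    refine ⟨fun hw => ⟨w, hw, fun v hv => (hsepA w v hw hv).1⟩, ?_⟩
    rintro ⟨u, hu, hw⟩
    by_contra hwT
    exact (hsepA u w hu hwT).2 (hw w hwT)
  rw [hT]
  exact Finset.sup_induction hbot (fun A hA B hB => hunion A B hA hB) fun u _ =>
    Finset.inf_induction htop (fun A hA B hB => hinter A B hA hB) fun v _ => hA u v

theorem tight_union_inter_of_supermodular {f : Finset α → ℝ} (hf : Supermodular f)
    {x : α → ℝ} (hx : ∀ A, f A ≤ ∑ v ∈ A, x v) {A B : Finset α}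
    (hA : ∑ v ∈ A, x v = f A) (hB : ∑ v ∈ B, x v = f B) :
    ∑ v ∈ A ∪ B, x v = f (A ∪ B) ∧ ∑ v ∈ A ∩ B, x v = f (A ∩ B) := by
  have hsum := Finset.sum_union_inter (s₁ := A) (s₂ := B) (f := x)
  have := hf A B
  constructor <;> linarith [hx (A ∪ B), hx (A ∩ B)]

theorem tight_union_inter_of_submodular {g : Finset α → ℝ} (hg : Submodular g)
    {y : α → ℝ} (hy : ∀ A, ∑ v ∈ A, y v ≤ g A) {A B : Finset α}
    (hA : ∑ v ∈ A, y v = g A) (hB : ∑ v ∈ B, y v = g B) :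
    ∑ v ∈ A ∪ B, y v = g (A ∪ B) ∧ ∑ v ∈ A ∩ B, y v = g (A ∩ B) := by
  have hsum := Finset.sum_union_inter (s₁ := A) (s₂ := B) (f := y)
  have := hg A B
  constructor <;> linarith [hy (A ∪ B), hy (A ∩ B)]

theorem sum_add_single_sub_single (z : α → ℝ) (a b : α) (ε : ℝ) (A : Finset α) :
    ∑ w ∈ A, (z + Pi.single a ε - Pi.single b ε : α → ℝ) w
      = ∑ w ∈ A, z w + (if a ∈ A then ε else 0) - (if b ∈ A then ε else 0) := by
  simp only [Pi.add_apply, Pi.sub_apply, Finset.sum_add_distrib, Finset.sum_sub_distrib,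
    Finset.sum_pi_single']

section Prefix

variable {k : ℕ} (S : Fin k → Finset α)

/-- `S_{<j}`; unlike `below`, the index `j` ranges over `ℕ`, so that `prefixUnion S k = V`. -/
def prefixUnion (j : ℕ) : Finset α :=
  (univ.filter fun i : Fin k => (i : ℕ) < j).biUnion S

variable {S}

theorem mem_prefixUnion {v : α} {j : ℕ} :
    v ∈ prefixUnion S j ↔ ∃ i : Fin k, (i : ℕ) < j ∧ v ∈ S i := by
  simp [prefixUnion]

theorem prefixUnion_zero : prefixUnion S 0 = ∅ := by
  ext v
  simp [mem_prefixUnion]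

theorem prefixUnion_succ (i : Fin k) : prefixUnion S (i + 1) = S i ∪ prefixUnion S i := by
  ext v
  simp only [mem_prefixUnion, Finset.mem_union, Nat.lt_succ_iff_lt_or_eq, or_and_right,
    exists_or]
  rw [or_comm]
  exact or_congr_left ⟨fun ⟨l, hl, hv⟩ => Fin.ext hl ▸ hv, fun hv => ⟨i, rfl, hv⟩⟩

theorem below_eq_prefixUnion (i : Fin k) : below S i = prefixUnion S i :=
  rfl

theorem le_of_mem_of_notMem_prefixUnion {v : α} {i : Fin k} {j : ℕ} (hv : v ∈ S i)
    (hj : v ∉ prefixUnion S j) : j ≤ i :=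
  not_lt.1 fun h => hj (mem_prefixUnion.2 ⟨i, h, hv⟩)

end Prefix

theorem marginal_le_sum_of_tight {f : Finset α → ℝ} {x : α → ℝ}
    (hx : ∀ A, f A ≤ ∑ v ∈ A, x v) {A B : Finset α} (hA : ∑ v ∈ A, x v = f A)
    (hB : Disjoint B A) : marginal f B A ≤ ∑ v ∈ B, x v := by
  have := hx (B ∪ A)
  rw [Finset.sum_union hB] at this
  unfold marginal
  linarith

theorem sum_le_marginal_of_tight {g : Finset α → ℝ} {y : α → ℝ}
    (hy : ∀ A, ∑ v ∈ A, y v ≤ g A) {A B : Finset α} (hA : ∑ v ∈ A, y v = g A)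
    (hB : Disjoint B A) : ∑ v ∈ B, y v ≤ marginal g B A := by
  have := hy (B ∪ A)
  rw [Finset.sum_union hB] at this
  unfold marginal
  linarith

theorem marginal_sdiff_eq_sum {h : Finset α → ℝ} {x : α → ℝ} {A T : Finset α} (hAT : A ⊆ T)
    (hA : ∑ v ∈ A, x v = h A) (hT : ∑ v ∈ T, x v = h T) :
    marginal h (T \ A) A = ∑ v ∈ T \ A, x v := by
  have := Finset.sum_sdiff hAT (f := x)
  rw [marginal, Finset.sdiff_union_of_subset hAT]
  linarith

theorem sum_union_eq_of_marginal {h : Finset α → ℝ} {x : α → ℝ} {A B : Finset α}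
    (hBA : Disjoint B A) (hA : ∑ v ∈ A, x v = h A) (hB : ∑ v ∈ B, x v = marginal h B A) :
    ∑ v ∈ B ∪ A, x v = h (B ∪ A) := by
  rw [Finset.sum_union hBA, hA, hB, marginal]
  ring

theorem marginal_union (h : Finset α → ℝ) (A B C : Finset α) :
    marginal h (B ∪ C) A = marginal h B A + marginal h C (B ∪ A) := by
  rw [marginal, marginal, marginal, Finset.union_right_comm, Finset.union_comm C]
  ring

namespace DualModular

variable {f g : Finset α → ℝ}

theorem marginal_g_pos (hdm : DualModular f g) {A B : Finset α} (hB : B.Nonempty)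
    (hBA : Disjoint B A) : 0 < marginal g B A := by
  obtain ⟨b, hb⟩ := hB
  have hlt := hdm.g_strictMono A (B ∪ A) <| (Finset.ssubset_iff_of_subset
    Finset.subset_union_right).2 ⟨b, Finset.mem_union_left _ hb, Finset.disjoint_left.1 hBA hb⟩
  unfold marginal
  linarith

theorem margDensity_nonneg (hdm : DualModular f g) {A B : Finset α} (hB : B.Nonempty)
    (hBA : Disjoint B A) : 0 ≤ margDensity f g B A :=
  div_nonneg (sub_nonneg.2 (hdm.f_mono _ _ Finset.subset_union_right))
    (hdm.marginal_g_pos hB hBA).le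

end DualModular

end SetFunctions

theorem pos_of_memBg {g : Finset V → ℝ} (hg : StrictMonoFn g) {y : V → ℝ} (hy : memBg g y)
    (v : V) : 0 < y v := by
  have hlt := hg _ _ (Finset.erase_ssubset (Finset.mem_univ v))
  have hsplit := Finset.sum_erase_add _ y (Finset.mem_univ v)
  linarith [hy.2.1, hy.2.2 (univ.erase v)]

theorem memBf_add_single_sub_single {f : Finset V → ℝ} (hf : ∀ A, 0 ≤ f A) {x : V → ℝ}
    (hx : memBf f x) {u v : V} (huv : u ≠ v) {ε : ℝ} (hε : 0 ≤ ε)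
    (hslack : ∀ A, u ∈ A ∧ v ∉ A → f A + ε ≤ ∑ w ∈ A, x w) :
    memBf f (x + Pi.single v ε - Pi.single u ε) := by
  have hxu : f {u} + ε ≤ x u := by simpa [huv.symm] using hslack {u}
  have hfu := hf {u}
  refine ⟨fun w => ?_, ?_, fun A => ?_⟩
  · simp only [Pi.add_apply, Pi.sub_apply, Pi.single_apply]
    split_ifs <;> subst_vars <;> linarith [hx.1 w]
  · rw [sum_add_single_sub_single]
    simp [hx.2.1]
  · rw [sum_add_single_sub_single]
    have := hx.2.2 A
    split_ifs with hv hu hu <;> first | linarith | linarith [hslack A ⟨hu, hv⟩]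

theorem memBg_add_single_sub_single {g : Finset V → ℝ} {y : V → ℝ} (hy : memBg g y)
    {u v : V} {ε : ℝ} (hε : 0 ≤ ε) (hεv : ε ≤ y v)
    (hslack : ∀ A, u ∈ A ∧ v ∉ A → ∑ w ∈ A, y w + ε ≤ g A) :
    memBg g (y + Pi.single u ε - Pi.single v ε) := by
  refine ⟨fun w => ?_, ?_, fun A => ?_⟩
  · simp only [Pi.add_apply, Pi.sub_apply, Pi.single_apply]
    split_ifs <;> subst_vars <;> linarith [hy.1 w]
  · rw [sum_add_single_sub_single]
    simp [hy.2.1]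
  · rw [sum_add_single_sub_single]
    have := hy.2.2 A
    split_ifs with hu hv hv <;> first | linarith | linarith [hslack A ⟨hu, hv⟩]

namespace LexOptimal

variable {f g : Finset V → ℝ} {x y : V → ℝ}

theorem exists_f_tight_separating (hdm : DualModular f g) (hlex : LexOptimal f g x y) {u v : V}
    (hvu : x v / y v < x u / y u) : ∃ A, ∑ w ∈ A, x w = f A ∧ u ∈ A ∧ v ∉ A := by
  obtain ⟨⟨hx, hy⟩, hmin⟩ := hlex
  by_contra! hblocked
  have huv : u ≠ v := by rintro rfl; exact lt_irrefl _ hvu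
  obtain ⟨ε₀, hε₀, hslack⟩ := exists_pos_add_le (p := fun A => u ∈ A ∧ v ∉ A)
    (a := f) (b := fun A => ∑ w ∈ A, x w)
    fun A hA => (hx.2.2 A).lt_of_ne fun h => hA.2 (hblocked A h.symm hA.1)
  have hyu := pos_of_memBg hdm.g_strictMono hy u
  have hyv := pos_of_memBg hdm.g_strictMono hy v
  have hgap : x v < x u / y u * y v := (div_lt_iff₀ hyv).1 hvu
  set ε := min ε₀ ((x u / y u * y v - x v) / 2)
  have hε : 0 < ε := lt_min hε₀ (by linarith)
  have hεε₀ : ε ≤ ε₀ := min_le_left _ _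
  have hx' := memBf_add_single_sub_single hdm.f_nonneg hx huv hε.le fun A hA => by
    linarith [hslack A hA]
  refine (hmin _ y ⟨hx', hy⟩).not_gt (sortedDensities_lt_of_pair ?_ ?_ hvu ?_)
  · intro w hwu hwv
    simp [hwu, hwv]
  · simp only [Pi.add_apply, Pi.sub_apply, Pi.single_eq_same, Pi.single_eq_of_ne huv, add_zero]
    exact div_lt_div_of_pos_right (by linarith) hyu
  · simp only [Pi.add_apply, Pi.sub_apply, Pi.single_eq_same, Pi.single_eq_of_ne huv.symm,
      sub_zero]
    rw [div_lt_iff₀ hyv]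
    linarith [min_le_right ε₀ ((x u / y u * y v - x v) / 2)]

theorem exists_g_tight_separating (hdm : DualModular f g) (hlex : LexOptimal f g x y) {u v : V}
    (hvu : x v / y v < x u / y u) : ∃ A, ∑ w ∈ A, y w = g A ∧ u ∈ A ∧ v ∉ A := by
  obtain ⟨⟨hx, hy⟩, hmin⟩ := hlex
  by_contra! hblocked
  have huv : u ≠ v := by rintro rfl; exact lt_irrefl _ hvu
  obtain ⟨ε₀, hε₀, hslack⟩ := exists_pos_add_le (p := fun A => u ∈ A ∧ v ∉ A)
    (a := fun A => ∑ w ∈ A, y w) (b := g)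
    fun A hA => (hy.2.2 A).lt_of_ne fun h => hA.2 (hblocked A h hA.1)
  have hyu := pos_of_memBg hdm.g_strictMono hy u
  have hyv := pos_of_memBg hdm.g_strictMono hy v
  have hdu : 0 < x u / y u := (div_nonneg (hx.1 v) hyv.le).trans_lt hvu
  have hgap : x v / (x u / y u) < y v := by
    rw [div_lt_iff₀ hdu, mul_comm]
    exact (div_lt_iff₀ hyv).1 hvu
  have hc : 0 ≤ x v / (x u / y u) := div_nonneg (hx.1 v) hdu.le
  -- keeping `y v - ε` above `x v / (x u / y u)` keeps the density of `v` below that of `u`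
  set ε := min ε₀ ((y v - x v / (x u / y u)) / 2)
  have hε : 0 < ε := lt_min hε₀ (by linarith)
  have hεv : ε ≤ (y v - x v / (x u / y u)) / 2 := min_le_right _ _
  have hεε₀ : ε ≤ ε₀ := min_le_left _ _
  have hy' := memBg_add_single_sub_single hy hε.le (by linarith) fun A hA => by
    linarith [hslack A hA]
  refine (hmin x _ ⟨hx, hy'⟩).not_gt (sortedDensities_lt_of_pair ?_ ?_ hvu ?_)
  · intro w hwu hwv
    simp [hwu, hwv]
  · simp only [Pi.add_apply, Pi.sub_apply, Pi.single_eq_same, Pi.single_eq_of_ne huv, sub_zero]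
    exact div_lt_div_of_pos_left ((div_pos_iff_of_pos_right hyu).1 hdu) hyu (by linarith)
  · simp only [Pi.add_apply, Pi.sub_apply, Pi.single_eq_same, Pi.single_eq_of_ne huv.symm,
      add_zero]
    have : x v / (x u / y u) < y v - ε := by linarith
    rwa [div_lt_iff₀ hdu, mul_comm, ← div_lt_iff₀ (by linarith)] at this

theorem locallyMaximin (hdm : DualModular f g) (hlex : LexOptimal f g x y) :
    LocallyMaximin f g x y := by
  have ⟨⟨hx, hy⟩, _⟩ := hlex
  intro ρ _
  have hsep : ∀ u ∈ univ.filter (fun v => ρ ≤ x v / y v),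
      ∀ v ∉ univ.filter (fun v => ρ ≤ x v / y v), x v / y v < x u / y u := by
    simp only [Finset.mem_filter, Finset.mem_univ, true_and, not_le]
    exact fun u hu v hv => hv.trans_le hu
  constructor
  · refine Finset.separating_induction (P := fun A => ∑ w ∈ A, x w = f A)
      (by simp [hdm.f_empty]) hx.2.1
      (fun A B hA hB => (tight_union_inter_of_supermodular hdm.f_supermodular hx.2.2 hA hB).1)
      (fun A B hA hB => (tight_union_inter_of_supermodular hdm.f_supermodular hx.2.2 hA hB).2)
      fun u hu v hv => hlex.exists_f_tight_separating hdm (hsep u hu v hv)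
  · refine Finset.separating_induction (P := fun A => ∑ w ∈ A, y w = g A)
      (by simp [hdm.g_empty]) hy.2.1
      (fun A B hA hB => (tight_union_inter_of_submodular hdm.g_submodular hy.2.2 hA hB).1)
      (fun A B hA hB => (tight_union_inter_of_submodular hdm.g_submodular hy.2.2 hA hB).2)
      fun u hu v hv => hlex.exists_g_tight_separating hdm (hsep u hu v hv)

end LexOptimal

namespace IsDensityDecomposition

variable {f g : Finset V → ℝ} {k : ℕ} {S : Fin k → Finset V}

theorem prefixUnion_eq_univ (hdec : IsDensityDecomposition f g S) :
    prefixUnion S k = univ := by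
  rw [← hdec.cover]
  ext v
  simp [mem_prefixUnion]

theorem notMem_prefixUnion (hdec : IsDensityDecomposition f g S) {i : Fin k} {v : V}
    (hv : v ∈ S i) : v ∉ prefixUnion S i :=
  Finset.disjoint_left.1 (hdec.disj i) hv

theorem exists_mem (hdec : IsDensityDecomposition f g S) (v : V) : ∃ i, v ∈ S i := by
  have hv : v ∈ univ.biUnion S := hdec.cover ▸ Finset.mem_univ v
  simpa using hv

theorem marginal_f_eq (hdm : DualModular f g) (hdec : IsDensityDecomposition f g S)
    (i : Fin k) :
    marginal f (S i) (prefixUnion S i)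
      = decompDensity f g S i * marginal g (S i) (prefixUnion S i) :=
  (div_mul_cancel₀ _ (hdm.marginal_g_pos (hdec.nonempty i) (hdec.disj i)).ne').symm

theorem decompDensity_nonneg (hdm : DualModular f g) (hdec : IsDensityDecomposition f g S)
    (i : Fin k) : 0 ≤ decompDensity f g S i :=
  hdm.margDensity_nonneg (hdec.nonempty i) (hdec.disj i)

/-- If `ρ_{i+1} ≥ ρ_i`, then `S_i ∪ S_{i+1}` would be at least as dense as `S_i` over `S_{<i}`,
contradicting the maximality of `S_i`. -/
theorem decompDensity_succ_lt (hdm : DualModular f g) (hdec : IsDensityDecomposition f g S)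
    {i j : Fin k} (hij : (j : ℕ) = i + 1) : decompDensity f g S j < decompDensity f g S i := by
  by_contra! hle
  set P := prefixUnion S i
  have hPj : prefixUnion S j = S i ∪ P := hij ▸ prefixUnion_succ i
  have hdisj : Disjoint (S j) (S i ∪ P) := hPj ▸ hdec.disj j
  have hGj : 0 < marginal g (S j) (S i ∪ P) := hdm.marginal_g_pos (hdec.nonempty j) hdisj
  have hFi : marginal f (S i) P = decompDensity f g S i * marginal g (S i) P :=
    hdec.marginal_f_eq hdm i
  have hFj : marginal f (S j) (S i ∪ P) = decompDensity f g S j * marginal g (S j) (S i ∪ P) :=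
    hPj ▸ hdec.marginal_f_eq hdm j
  have hdense : decompDensity f g S i ≤ margDensity f g (S i ∪ S j) (below S i) := by
    have hGi : 0 < marginal g (S i) P := hdm.marginal_g_pos (hdec.nonempty i) (hdec.disj i)
    rw [margDensity, below_eq_prefixUnion, marginal_union, marginal_union, hFi, hFj,
      le_div_iff₀ (by linarith)]
    nlinarith [mul_le_mul_of_nonneg_right hle hGj.le]
  have hsub := hdec.maximal i _ ((hdec.nonempty i).mono Finset.subset_union_left)
    (Finset.disjoint_union_left.2 ⟨hdec.disj i,
      Finset.disjoint_of_subset_right Finset.subset_union_right hdisj⟩) hdense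
  obtain ⟨v, hv⟩ := hdec.nonempty j
  exact Finset.disjoint_left.1 hdisj hv
    (Finset.mem_union_left _ (hsub (Finset.mem_union_right _ hv)))

theorem decompDensity_strictAnti (hdm : DualModular f g) (hdec : IsDensityDecomposition f g S) :
    StrictAnti (decompDensity f g S) := by
  rcases k with _ | n
  · exact fun i => i.elim0
  · exact Fin.strictAnti_iff_succ_lt.2 fun i => hdec.decompDensity_succ_lt hdm (by simp)

theorem union_prefixUnion_eq_univ (hdm : DualModular f g)
    (hdec : IsDensityDecomposition f g S) {i : Fin k} (hρ : decompDensity f g S i = 0) :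
    S i ∪ prefixUnion S i = univ := by
  have hne : (prefixUnion S i)ᶜ.Nonempty := (hdec.nonempty i).mono fun v hv =>
    Finset.mem_compl.2 (hdec.notMem_prefixUnion hv)
  have hsub := hdec.maximal i _ hne disjoint_compl_left
    (show decompDensity f g S i ≤ _ from hρ ▸ hdm.margDensity_nonneg hne disjoint_compl_left)
  exact Finset.eq_univ_of_forall fun v => (em (v ∈ prefixUnion S i)).elim
    (Finset.mem_union_right _) fun hv => Finset.mem_union_left _ (hsub (Finset.mem_compl.2 hv))

end IsDensityDecomposition

structure FollowsDecompUpTo (f g : Finset V → ℝ) {k : ℕ} (S : Fin k → Finset V)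
    (ρstar x y : V → ℝ) (j : ℕ) : Prop where
  density_eq : ∀ v ∈ prefixUnion S j, x v / y v = ρstar v
  density_lt : ∀ v ∉ prefixUnion S j, ∀ w ∈ prefixUnion S j, x v / y v < x w / y w
  tight_f : ∑ v ∈ prefixUnion S j, x v = f (prefixUnion S j)
  tight_g : ∑ v ∈ prefixUnion S j, y v = g (prefixUnion S j)

section Deviation

variable {f g : Finset V → ℝ} {k : ℕ} {S : Fin k → Finset V} {ρstar x y : V → ℝ}

theorem rhoStar_le_decompDensity (hdm : DualModular f g) (hdec : IsDensityDecomposition f g S)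
    (hρ : ∀ i : Fin k, ∀ v ∈ S i, ρstar v = decompDensity f g S i) {i : Fin k} {v : V}
    (hv : v ∉ prefixUnion S i) : ρstar v ≤ decompDensity f g S i := by
  obtain ⟨l, hl⟩ := hdec.exists_mem v
  rw [hρ l v hl]
  exact (hdec.decompDensity_strictAnti hdm).antitone (le_of_mem_of_notMem_prefixUnion hl hv)

theorem mem_of_decompDensity_le (hdm : DualModular f g) (hdec : IsDensityDecomposition f g S)
    (hρ : ∀ i : Fin k, ∀ v ∈ S i, ρstar v = decompDensity f g S i) {i : Fin k} {v : V}
    (hv : v ∉ prefixUnion S i) (hle : decompDensity f g S i ≤ ρstar v) : v ∈ S i := by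
  obtain ⟨l, hl⟩ := hdec.exists_mem v
  have heq : decompDensity f g S l = decompDensity f g S i :=
    le_antisymm (hρ l v hl ▸ rhoStar_le_decompDensity hdm hdec hρ hv) (hρ l v hl ▸ hle)
  exact (hdec.decompDensity_strictAnti hdm).injective heq ▸ hl

namespace FollowsDecompUpTo

variable {i : Fin k}

theorem decompDensity_mul_le (hdm : DualModular f g) (hdec : IsDensityDecomposition f g S)
    (hx : memBf f x) (hy : memBg g y) (hP : FollowsDecompUpTo f g S ρstar x y i) :
    decompDensity f g S i * marginal g (S i) (prefixUnion S i) ≤ ∑ v ∈ S i, x v ∧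
      ∑ v ∈ S i, y v ≤ marginal g (S i) (prefixUnion S i) :=
  ⟨hdec.marginal_f_eq hdm i ▸ marginal_le_sum_of_tight hx.2.2 hP.tight_f (hdec.disj i),
    sum_le_marginal_of_tight hy.2.2 hP.tight_g (hdec.disj i)⟩

theorem decompDensity_le (hdm : DualModular f g) (hdec : IsDensityDecomposition f g S)
    (hx : memBf f x) (hy : memBg g y) (hP : FollowsDecompUpTo f g S ρstar x y i) {μ : ℝ}
    (hμ : 0 ≤ μ) (hle : ∀ v ∈ S i, x v / y v ≤ μ) : decompDensity f g S i ≤ μ := by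
  obtain ⟨hxS, hyS⟩ := hP.decompDensity_mul_le hdm hdec hx hy
  have hG : 0 < marginal g (S i) (prefixUnion S i) :=
    hdm.marginal_g_pos (hdec.nonempty i) (hdec.disj i)
  have hxy : ∑ v ∈ S i, x v ≤ μ * ∑ v ∈ S i, y v := by
    rw [Finset.mul_sum]
    exact Finset.sum_le_sum fun v hv =>
      (div_le_iff₀ (pos_of_memBg hdm.g_strictMono hy v)).1 (hle v hv)
  exact le_of_mul_le_mul_right (by nlinarith [mul_le_mul_of_nonneg_left hyS hμ]) hG

theorem density_eq_of_le (hdm : DualModular f g) (hdec : IsDensityDecomposition f g S)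
    (hx : memBf f x) (hy : memBg g y) (hP : FollowsDecompUpTo f g S ρstar x y i)
    (hle : ∀ v ∈ S i, x v / y v ≤ decompDensity f g S i) :
    ∀ v ∈ S i, x v / y v = decompDensity f g S i := by
  obtain ⟨hxS, hyS⟩ := hP.decompDensity_mul_le hdm hdec hx hy
  have hρ0 := hdec.decompDensity_nonneg hdm i
  have hyv := pos_of_memBg hdm.g_strictMono hy
  have hterm : ∀ v ∈ S i, x v ≤ decompDensity f g S i * y v := fun v hv =>
    (div_le_iff₀ (hyv v)).1 (hle v hv)
  have hsum : ∑ v ∈ S i, x v = ∑ v ∈ S i, decompDensity f g S i * y v := by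
    refine le_antisymm (Finset.sum_le_sum hterm) ?_
    rw [← Finset.mul_sum]
    nlinarith [mul_le_mul_of_nonneg_left hyS hρ0]
  intro v hv
  rw [div_eq_iff (hyv v).ne']
  exact (Finset.sum_eq_sum_iff_of_le hterm).1 hsum v hv

theorem tight_succ (hdm : DualModular f g) (hdec : IsDensityDecomposition f g S)
    (hx : memBf f x) (hy : memBg g y) (hP : FollowsDecompUpTo f g S ρstar x y i)
    (heq : ∀ v ∈ S i, x v / y v = decompDensity f g S i) :
    ∑ v ∈ prefixUnion S (i + 1), x v = f (prefixUnion S (i + 1)) ∧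
      ∑ v ∈ prefixUnion S (i + 1), y v = g (prefixUnion S (i + 1)) := by
  obtain ⟨hxS, hyS⟩ := hP.decompDensity_mul_le hdm hdec hx hy
  have hρ0 := hdec.decompDensity_nonneg hdm i
  have hsum : ∑ v ∈ S i, x v = decompDensity f g S i * ∑ v ∈ S i, y v := by
    rw [Finset.mul_sum]
    refine Finset.sum_congr rfl fun v hv => ?_
    rw [← heq v hv, div_mul_cancel₀ _ (pos_of_memBg hdm.g_strictMono hy v).ne']
  have hρG := mul_le_mul_of_nonneg_left hyS hρ0
  rw [prefixUnion_succ]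
  refine ⟨sum_union_eq_of_marginal (hdec.disj i) hP.tight_f ?_, ?_⟩
  · rw [hdec.marginal_f_eq hdm i]
    linarith
  · rcases hρ0.eq_or_lt with hρ | hρ
    -- `ρ_i = 0` says nothing about `y(S_i)`, but then `S_i` is the last block
    · rw [hdec.union_prefixUnion_eq_univ hdm hρ.symm]
      exact hy.2.1
    · refine sum_union_eq_of_marginal (hdec.disj i) hP.tight_g ?_
      exact le_antisymm hyS (le_of_mul_le_mul_left (by linarith) hρ)

theorem succ (hdm : DualModular f g) (hdec : IsDensityDecomposition f g S)
    (hρ : ∀ i : Fin k, ∀ v ∈ S i, ρstar v = decompDensity f g S i)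
    (hx : memBf f x) (hy : memBg g y) (hP : FollowsDecompUpTo f g S ρstar x y i)
    (hmax : ∀ w ∉ prefixUnion S i, (∀ v ∉ prefixUnion S i, x v / y v ≤ x w / y w) →
      ρstar w = x w / y w) :
    FollowsDecompUpTo f g S ρstar x y (i + 1) := by
  set P := prefixUnion S i
  obtain ⟨w, hw, hwmax⟩ := Pᶜ.exists_max_image (fun v => x v / y v)
    ((hdec.nonempty i).mono fun v hv => Finset.mem_compl.2 (hdec.notMem_prefixUnion hv))
  simp only [Finset.mem_compl] at hw hwmax
  have hwρ : decompDensity f g S i ≤ x w / y w :=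
    hP.decompDensity_le hdm hdec hx hy (div_nonneg (hx.1 w) (hy.1 w))
      fun v hv => hwmax v (hdec.notMem_prefixUnion hv)
  have hwS : w ∈ S i := mem_of_decompDensity_le hdm hdec hρ hw (hmax w hw hwmax ▸ hwρ)
  have hμ : x w / y w = decompDensity f g S i := by rw [← hmax w hw hwmax, hρ i w hwS]
  have hSi := hP.density_eq_of_le hdm hdec hx hy fun v hv =>
    hμ ▸ hwmax v (hdec.notMem_prefixUnion hv)
  have hlt : ∀ v ∉ S i ∪ P, x v / y v < decompDensity f g S i := by
    intro v hv
    rw [Finset.mem_union, not_or] at hv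
    refine lt_of_le_of_ne (hμ ▸ hwmax v hv.2) fun hvρ => hv.1 ?_
    refine mem_of_decompDensity_le hdm hdec hρ hv.2 ?_
    rw [hmax v hv.2 fun u hu => hvρ ▸ hμ ▸ hwmax u hu, hvρ]
  obtain ⟨htf, htg⟩ := hP.tight_succ hdm hdec hx hy hSi
  refine ⟨?_, ?_, htf, htg⟩ <;> rw [prefixUnion_succ]
  · intro v hv
    rcases Finset.mem_union.1 hv with hv | hv
    · rw [hSi v hv, hρ i v hv]
    · exact hP.density_eq v hv
  · intro v hv u hu
    rcases Finset.mem_union.1 hu with hu | hu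
    · exact (hSi u hu).symm ▸ hlt v hv
    · exact hP.density_lt v (fun h => hv (Finset.mem_union_right _ h)) u hu

end FollowsDecompUpTo

theorem density_eq_or_exists_deviation (hdm : DualModular f g)
    (hdec : IsDensityDecomposition f g S)
    (hρ : ∀ i : Fin k, ∀ v ∈ S i, ρstar v = decompDensity f g S i)
    (hx : memBf f x) (hy : memBg g y) :
    (∀ v, x v / y v = ρstar v) ∨ ∃ i : Fin k, FollowsDecompUpTo f g S ρstar x y i ∧
      ∃ w ∉ prefixUnion S i, (∀ v ∉ prefixUnion S i, x v / y v ≤ x w / y w) ∧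
        ρstar w ≠ x w / y w := by
  refine Nat.decreasingInduction (n := k)
    (motive := fun j _ => FollowsDecompUpTo f g S ρstar x y j → _) ?_ ?_ k.zero_le
    ⟨by simp [prefixUnion_zero], by simp [prefixUnion_zero],
      by simp [prefixUnion_zero, hdm.f_empty], by simp [prefixUnion_zero, hdm.g_empty]⟩
  · intro j hj ih hP
    by_cases hdev : ∃ w ∉ prefixUnion S j, (∀ v ∉ prefixUnion S j, x v / y v ≤ x w / y w) ∧
        ρstar w ≠ x w / y w
    · exact Or.inr ⟨⟨j, hj⟩, hP, hdev⟩
    · push Not at hdev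
      exact ih (hP.succ (i := ⟨j, hj⟩) hdm hdec hρ hx hy hdev)
  · exact fun hP => Or.inl fun v => hP.density_eq v (hdec.prefixUnion_eq_univ ▸ Finset.mem_univ v)

end Deviation

section Main

variable {f g : Finset V → ℝ} {k : ℕ} {S : Fin k → Finset V} {ρstar x y : V → ℝ}

theorem lexOptimal_of_density_eq (hdm : DualModular f g) (hdec : IsDensityDecomposition f g S)
    (hρ : ∀ i : Fin k, ∀ v ∈ S i, ρstar v = decompDensity f g S i)
    (halloc : Allocation f g x y) (hd : ∀ v, x v / y v = ρstar v) : LexOptimal f g x y := by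
  refine ⟨halloc, fun x' y' ⟨hx', hy'⟩ => ?_⟩
  rcases density_eq_or_exists_deviation hdm hdec hρ hx' hy' with
    heq | ⟨i, hP, w, hw, hwmax, hne⟩
  · refine le_of_eq ?_
    rw [sortedDensities_eq_sort_ge, sortedDensities_eq_sort_ge]
    simp only [hd, heq]
  have hρμ : decompDensity f g S i ≤ x' w / y' w :=
    hP.decompDensity_le hdm hdec hx' hy' (div_nonneg (hx'.1 w) (hy'.1 w))
      fun v hv => hwmax v (hdec.notMem_prefixUnion hv)
  -- the first difference of the sorted density vectors is at the value `x' w / y' w`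
  refine (sortedDensities_lt_of_ssubset (x' w / y' w) (fun v hv => ?_) ?_).le
  · simp only [hd] at hv ⊢
    by_cases hvP : v ∈ prefixUnion S i
    · exact (hP.density_eq v hvP).symm
    · have := rhoStar_le_decompDensity hdm hdec hρ hvP
      have := hwmax v hvP
      rcases hv with hv | hv <;> linarith
  · simp only [hd]
    refine (Finset.ssubset_iff_of_subset fun v hv => ?_).2
      ⟨w, by simp, by simpa using fun h => hne h.symm⟩
    simp only [Finset.mem_filter, Finset.mem_univ, true_and] at hv ⊢
    have hvP : v ∉ prefixUnion S i := fun hvP => by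
      have := hP.density_lt w hw v hvP
      rw [hP.density_eq v hvP] at this
      linarith
    have hvS : v ∈ S i := mem_of_decompDensity_le hdm hdec hρ hvP (hv ▸ hρμ)
    have hμ : x' w / y' w = decompDensity f g S i := hv.trans (hρ i v hvS)
    rw [hμ, hP.density_eq_of_le hdm hdec hx' hy'
      (fun u hu => hμ ▸ hwmax u (hdec.notMem_prefixUnion hu)) v hvS]

theorem density_eq_of_locallyMaximin (hdm : DualModular f g)
    (hdec : IsDensityDecomposition f g S)
    (hρ : ∀ i : Fin k, ∀ v ∈ S i, ρstar v = decompDensity f g S i)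
    (halloc : Allocation f g x y) (hmax : LocallyMaximin f g x y) :
    ∀ v, x v / y v = ρstar v := by
  obtain ⟨hx, hy⟩ := halloc
  refine (density_eq_or_exists_deviation hdm hdec hρ hx hy).resolve_right ?_
  rintro ⟨i, hP, w, hw, hwmax, hne⟩
  set P := prefixUnion S i
  set μ := x w / y w
  set T := univ.filter fun v => μ ≤ x v / y v
  have hPT : P ⊆ T := fun v hv =>
    Finset.mem_filter.2 ⟨Finset.mem_univ v, (hP.density_lt w hw v hv).le⟩
  have hTP : ∀ v ∈ T \ P, x v / y v = μ := fun v hv => by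
    simp only [T, Finset.mem_sdiff, Finset.mem_filter, Finset.mem_univ, true_and] at hv
    exact le_antisymm (hwmax v hv.2) hv.1
  have hwT : w ∈ T \ P := by simp [T, μ, hw]
  have hμ0 : 0 ≤ μ := div_nonneg (hx.1 w) (hy.1 w)
  -- the upper level set at `μ` is tight, so `T \ P` has marginal density `μ` over `P`
  have hdense : μ ≤ margDensity f g (T \ P) (below S i) := by
    rcases hμ0.eq_or_lt with hμ | hμ
    · rw [← hμ]
      exact hdm.margDensity_nonneg ⟨w, hwT⟩ Finset.sdiff_disjoint
    · obtain ⟨hxT, hyT⟩ := hmax μ hμ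
      have hyTP : 0 < ∑ v ∈ T \ P, y v :=
        Finset.sum_pos (fun v _ => pos_of_memBg hdm.g_strictMono hy v) ⟨w, hwT⟩
      rw [margDensity, below_eq_prefixUnion, marginal_sdiff_eq_sum hPT hP.tight_f hxT,
        marginal_sdiff_eq_sum hPT hP.tight_g hyT, le_div_iff₀ hyTP, Finset.mul_sum]
      exact Finset.sum_le_sum fun v hv =>
        ((div_eq_iff (pos_of_memBg hdm.g_strictMono hy v).ne').1 (hTP v hv)).ge
  have hρμ : decompDensity f g S i ≤ μ := hP.decompDensity_le hdm hdec hx hy hμ0 fun v hv =>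
    hwmax v (hdec.notMem_prefixUnion hv)
  have hμρ : μ ≤ decompDensity f g S i :=
    hdense.trans (hdec.maxDensity i _ ⟨w, hwT⟩ Finset.sdiff_disjoint)
  have hwS : w ∈ S i := hdec.maximal i _ ⟨w, hwT⟩ Finset.sdiff_disjoint (hρμ.trans hdense) hwT
  exact hne ((hρ i w hwS).trans (le_antisymm hρμ hμρ))

end Main

/-- Theorem 1.1: for an allocation, inducing the decomposition densities,
lexicographic optimality and the locally maximin condition are all equivalent. -/
theorem market_fairness_equivalence (f g : Finset V → ℝ) (hdm : DualModular f g)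
    {k : ℕ} (S : Fin k → Finset V) (hdec : IsDensityDecomposition f g S)
    (ρstar : V → ℝ) (hρ : ∀ i : Fin k, ∀ v ∈ S i, ρstar v = decompDensity f g S i)
    (x y : V → ℝ) (halloc : Allocation f g x y) :
    ((∀ v : V, x v / y v = ρstar v) ↔ LexOptimal f g x y) ∧
    (LexOptimal f g x y ↔ LocallyMaximin f g x y) := by
  have h12 := lexOptimal_of_density_eq hdm hdec hρ halloc
  have h23 : LexOptimal f g x y → LocallyMaximin f g x y := LexOptimal.locallyMaximin hdm
  have h31 := density_eq_of_locallyMaximin hdm hdec hρ halloc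
  exact ⟨⟨h12, fun h => h31 (h23 h)⟩, ⟨h23, fun h => h12 (h31 h)⟩⟩
end

section
/- Let (V; f, g) be a dual-modular instance with density decomposition V = S₁ ∪ … ∪ S_k and densities ρ₁ > … > ρ_k. Fix γ ≥ 0 and let i be the largest index with ρ_i ≥ γ (with i = 0 and S_{≤0} = ∅ if no such index exists). Then the subset S_{≤i} = S₁ ∪ … ∪ S_i maximizes f(S) − γ·g(S) over all S ⊆ V. In particular, for a contract parameter α ∈ (0,1] and γ = 1/α, the set S_{≤i} is an optimal agent response maximizing α·f(S) − g(S). -/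
open Finset

variable {V : Type*} [Fintype V] [DecidableEq V]

section AuxProof

variable {f g : Finset V → ℝ}

private lemma mono_of_strictMono (hg : StrictMonoFn g) : MonotoneFn g := by
  intro A B h
  rcases eq_or_ne A B with h' | h'
  · rw [h']
  · exact (hg A B (Finset.ssubset_iff_subset_ne.mpr ⟨h, h'⟩)).le

private lemma marg_nonneg (hf : MonotoneFn f) (T A : Finset V) : 0 ≤ marginal f T A :=
  sub_nonneg.mpr (hf A (T ∪ A) subset_union_right)

private lemma marg_pos (hg : StrictMonoFn g) {T A : Finset V} (hT : T.Nonempty)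
    (hd : Disjoint T A) : 0 < marginal g T A := by
  obtain ⟨v, hv⟩ := hT
  refine sub_pos.mpr (hg A (T ∪ A) (Finset.ssubset_iff_subset_ne.mpr
    ⟨subset_union_right, fun h => ?_⟩))
  have : v ∈ A := by rw [h]; exact mem_union_left A hv
  exact (Finset.disjoint_left.mp hd hv) this

private lemma marg_mono_ctx_super (hf : Supermodular f) (hmono : MonotoneFn f)
    {T A A' : Finset V} (hAA : A ⊆ A') (hT : T ∩ A' ⊆ A) :
    marginal f T A ≤ marginal f T A' := by
  have h := hf (T ∪ A) A'
  have h1 : (T ∪ A) ∪ A' = T ∪ A' := by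
    rw [union_assoc, union_eq_right.mpr hAA]
  have h2 : (T ∪ A) ∩ A' ⊆ A := by
    rw [union_inter_distrib_right]
    exact union_subset hT inter_subset_left
  have h3 := hmono _ _ h2
  rw [h1] at h
  unfold marginal
  linarith

private lemma marg_anti_ctx_sub (hg : Submodular g) (hmono : MonotoneFn g)
    {T A A' : Finset V} (hAA : A ⊆ A') :
    marginal g T A' ≤ marginal g T A := by
  have h := hg (T ∪ A) A'
  have h1 : (T ∪ A) ∪ A' = T ∪ A' := by
    rw [union_assoc, union_eq_right.mpr hAA]
  have h2 : A ⊆ (T ∪ A) ∩ A' := subset_inter subset_union_right hAA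
  have h3 := hmono _ _ h2
  rw [h1] at h
  unfold marginal
  linarith

private lemma marg_add (h : Finset V → ℝ) {X T : Finset V} (A : Finset V) (hX : X ⊆ T) :
    marginal h T A = marginal h X A + marginal h (T \ X) (X ∪ A) := by
  unfold marginal
  have e : (T \ X) ∪ (X ∪ A) = T ∪ A := by
    rw [← union_assoc, sdiff_union_of_subset hX]
  rw [e]; ring

/-- Prefix unions indexed by naturals. -/
def BnAux {k : ℕ} (S : Fin k → Finset V) (n : ℕ) : Finset V :=
  (Finset.univ.filter (fun j : Fin k => (j : ℕ) < n)).biUnion S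

private lemma below_eq_Bn {k : ℕ} (S : Fin k → Finset V) (i : Fin k) :
    below S i = BnAux S (i : ℕ) := by
  unfold below BnAux
  ext v
  simp only [mem_biUnion, mem_filter, mem_univ, true_and]
  constructor
  · rintro ⟨j, hj, hv⟩
    exact ⟨j, Fin.lt_def.mp hj, hv⟩
  · rintro ⟨j, hj, hv⟩
    exact ⟨j, Fin.lt_def.mpr hj, hv⟩

private lemma Bn_zero {k : ℕ} (S : Fin k → Finset V) : BnAux S 0 = ∅ := by
  simp [BnAux]

private lemma Bn_succ {k : ℕ} (S : Fin k → Finset V) {n : ℕ} (h : n < k) :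
    BnAux S (n + 1) = BnAux S n ∪ S ⟨n, h⟩ := by
  unfold BnAux
  ext v
  simp only [mem_biUnion, mem_filter, mem_univ, true_and, mem_union]
  constructor
  · rintro ⟨j, hj, hv⟩
    rcases Nat.lt_succ_iff_lt_or_eq.mp hj with h' | h'
    · exact Or.inl ⟨j, h', hv⟩
    · right; rwa [show (⟨n, h⟩ : Fin k) = j from (Fin.ext h'.symm)]
  · rintro (⟨j, hj, hv⟩ | hv)
    · exact ⟨j, Nat.lt_succ_of_lt hj, hv⟩
    · exact ⟨⟨n, h⟩, Nat.lt_succ_self n, hv⟩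

private lemma Bn_univ {k : ℕ} {S : Fin k → Finset V}
    (hcov : Finset.univ.biUnion S = Finset.univ) : BnAux S k = Finset.univ := by
  rw [← hcov]
  unfold BnAux
  congr 1
  ext j
  simp [j.isLt]

private lemma marg_g_eq (hdm : DualModular f g) {k : ℕ} {S : Fin k → Finset V}
    (hdec : IsDensityDecomposition f g S) (t : Fin k) :
    marginal f (S t) (below S t)
      = decompDensity f g S t * marginal g (S t) (below S t) := by
  have hb : 0 < marginal g (S t) (below S t) :=
    marg_pos hdm.g_strictMono (hdec.nonempty t) (hdec.disj t)
  unfold decompDensity margDensity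
  field_simp

private lemma key_subset (hdm : DualModular f g) {k : ℕ} {S : Fin k → Finset V}
    (hdec : IsDensityDecomposition f g S) (t : Fin k) {X : Finset V} (hX : X ⊆ S t) :
    decompDensity f g S t * marginal g (S t \ X) (X ∪ below S t)
      ≤ marginal f (S t \ X) (X ∪ below S t) := by
  set B := below S t with hB
  set ρ := decompDensity f g S t with hρ
  have ha : marginal f (S t) B = ρ * marginal g (S t) B := marg_g_eq hdm hdec t
  have hfadd := marg_add f B hX
  have hgadd := marg_add g B hX
  have ha1 : marginal f X B ≤ ρ * marginal g X B := by
    rcases X.eq_empty_or_nonempty with h | h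
    · subst h; simp [marginal]
    · have hd : Disjoint X B := Finset.disjoint_of_subset_left hX (hdec.disj t)
      have hmax := hdec.maxDensity t X h hd
      have hb1 : 0 < marginal g X B := marg_pos hdm.g_strictMono h hd
      have h2 : marginal f X B / marginal g X B ≤ ρ := hmax
      exact (div_le_iff₀ hb1).mp h2
  have e : ρ * marginal g (S t) B
      = ρ * marginal g X B + ρ * marginal g (S t \ X) (X ∪ B) := by
    rw [hgadd]; ring
  linarith

private lemma rho_step (hdm : DualModular f g) {k : ℕ} {S : Fin k → Finset V}
    (hdec : IsDensityDecomposition f g S) (i : Fin k) (h : (i : ℕ) + 1 < k) :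
    decompDensity f g S ⟨(i : ℕ) + 1, h⟩ < decompDensity f g S i := by
  by_contra hle
  push_neg at hle
  set i' : Fin k := ⟨(i : ℕ) + 1, h⟩ with hi'
  have hBe : below S i' = below S i ∪ S i := by
    rw [below_eq_Bn S i', below_eq_Bn S i]
    have := Bn_succ S i.isLt
    simpa using this
  have hb : 0 < marginal g (S i) (below S i) :=
    marg_pos hdm.g_strictMono (hdec.nonempty i) (hdec.disj i)
  have hb' : 0 < marginal g (S i') (below S i') :=
    marg_pos hdm.g_strictMono (hdec.nonempty i') (hdec.disj i')
  have ha := marg_g_eq hdm hdec i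
  have ha' := marg_g_eq hdm hdec i'
  set T : Finset V := S i ∪ S i' with hT
  have hBsub : below S i ⊆ below S i' := by rw [hBe]; exact subset_union_left
  have hTd : Disjoint T (below S i) := by
    rw [hT, disjoint_union_left]
    exact ⟨hdec.disj i, Finset.disjoint_of_subset_right hBsub (hdec.disj i')⟩
  have hsetT : T ∪ below S i = S i' ∪ below S i' := by
    rw [hBe, hT]
    ext v
    simp only [mem_union]
    tauto
  have hBe' : f (below S i') = f (S i ∪ below S i) := by
    rw [hBe, union_comm]
  have hBe'' : g (below S i') = g (S i ∪ below S i) := by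
    rw [hBe, union_comm]
  have hmf : marginal f T (below S i)
      = marginal f (S i') (below S i') + marginal f (S i) (below S i) := by
    unfold marginal
    rw [hsetT, hBe']
    ring
  have hmg : marginal g T (below S i)
      = marginal g (S i') (below S i') + marginal g (S i) (below S i) := by
    unfold marginal
    rw [hsetT, hBe'']
    ring
  have hden : 0 < marginal g T (below S i) := by rw [hmg]; linarith
  have hnum : decompDensity f g S i * marginal g T (below S i)
      ≤ marginal f T (below S i) := by
    rw [hmf, hmg, ha, ha']
    nlinarith [mul_le_mul_of_nonneg_right hle hb'.le]
  have hge : decompDensity f g S i ≤ margDensity f g T (below S i) := by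
    unfold margDensity
    rw [le_div_iff₀ hden]
    exact hnum
  have hsub := hdec.maximal i T ((hdec.nonempty i).mono subset_union_left) hTd hge
  obtain ⟨v, hv⟩ := hdec.nonempty i'
  have hvi : v ∈ S i := hsub (mem_union_right _ hv)
  have hvb : v ∈ below S i' := by
    rw [hBe]; exact mem_union_right _ hvi
  exact (Finset.disjoint_left.mp (hdec.disj i') hv) hvb

private lemma rho_anti_nat (hdm : DualModular f g) {k : ℕ} {S : Fin k → Finset V}
    (hdec : IsDensityDecomposition f g S) :
    ∀ n, ∀ (hn : n < k) (j : Fin k), (j : ℕ) < n →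
      decompDensity f g S ⟨n, hn⟩ < decompDensity f g S j := by
  intro n
  induction n with
  | zero => intro _ j hj; omega
  | succ n ih =>
    intro hn j hj
    have hnk : n < k := Nat.lt_of_succ_lt hn
    have step : decompDensity f g S ⟨n + 1, hn⟩ < decompDensity f g S ⟨n, hnk⟩ := by
      have := rho_step hdm hdec ⟨n, hnk⟩ (by simpa using hn)
      simpa using this
    rcases Nat.lt_succ_iff_lt_or_eq.mp hj with h' | h'
    · exact step.trans (ih hnk j h')
    · have : j = ⟨n, hnk⟩ := Fin.ext h'
      rw [this]; exact step

private lemma rho_anti (hdm : DualModular f g) {k : ℕ} {S : Fin k → Finset V}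
    (hdec : IsDensityDecomposition f g S) {i j : Fin k} (h : j < i) :
    decompDensity f g S i < decompDensity f g S j := by
  have := rho_anti_nat hdm hdec (i : ℕ) i.isLt j h
  simpa using this

private lemma prefix_ex (hdm : DualModular f g) {k : ℕ} {S : Fin k → Finset V}
    (hdec : IsDensityDecomposition f g S) (γ : ℝ) :
    ∃ m, m ≤ k ∧ (Finset.univ.filter (fun i => γ ≤ decompDensity f g S i))
        = Finset.univ.filter (fun j : Fin k => (j : ℕ) < m) := by
  set I := Finset.univ.filter (fun i => γ ≤ decompDensity f g S i) with hI
  by_cases hIu : I = Finset.univ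
  · refine ⟨k, le_rfl, ?_⟩
    rw [hIu]
    symm
    apply filter_true_of_mem
    intro j _
    exact j.isLt
  · have hne : (Finset.univ \ I).Nonempty := by
      rw [sdiff_nonempty]
      intro hsub
      exact hIu (subset_antisymm (filter_subset _ _) hsub)
    set c := (Finset.univ \ I).min' hne with hc
    have hcmem : c ∈ Finset.univ \ I := Finset.min'_mem _ hne
    have hcnot : c ∉ I := (Finset.mem_sdiff.mp hcmem).2
    refine ⟨(c : ℕ), le_of_lt c.isLt, ?_⟩
    ext j
    simp only [hI, mem_filter, mem_univ, true_and]
    constructor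
    · intro hj
      by_contra hcj
      push_neg at hcj
      have hcle : c ≤ j := hcj
      rcases eq_or_lt_of_le hcle with he | hlt
      · exact hcnot (by rw [hI, mem_filter]; exact ⟨mem_univ _, he ▸ hj⟩)
      · have := rho_anti hdm hdec hlt
        exact hcnot (by rw [hI, mem_filter]; exact ⟨mem_univ _, le_of_lt (lt_of_le_of_lt hj this)⟩)
    · intro hj
      by_contra hjI
      have : j ∈ Finset.univ \ I := by
        rw [Finset.mem_sdiff, hI, mem_filter]
        exact ⟨mem_univ _, fun hm => hjI hm.2⟩
      have := Finset.min'_le _ _ this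
      rw [← hc] at this
      exact absurd hj (not_lt.mpr this)

private lemma chain_ineq (hdm : DualModular f g) {k : ℕ} {S : Fin k → Finset V}
    (hdec : IsDensityDecomposition f g S) {γ : ℝ} (hγ : 0 ≤ γ) {m : ℕ} (hm : m ≤ k)
    (hall : ∀ t : Fin k, (t : ℕ) < m → γ ≤ decompDensity f g S t)
    (W : Finset V) :
    ∀ n, n ≤ m → γ * (g (W ∪ BnAux S n) - g W) ≤ f (W ∪ BnAux S n) - f W := by
  have gmono : MonotoneFn g := mono_of_strictMono hdm.g_strictMono
  intro n
  induction n with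
  | zero => intro _; rw [Bn_zero, union_empty]; simp
  | succ n ih =>
    intro hnm
    have hnm' : n ≤ m := Nat.le_of_succ_le hnm
    have hnk : n < k := lt_of_lt_of_le hnm hm
    have IH := ih hnm'
    set t : Fin k := ⟨n, hnk⟩ with ht
    set C := W ∪ BnAux S n with hC
    set T' := S t \ C with hT'
    have hC' : W ∪ BnAux S (n + 1) = T' ∪ C := by
      rw [hT', hC, Bn_succ S hnk]
      ext v
      simp only [mem_union, mem_sdiff]
      tauto
    have hBt : below S t = BnAux S n := below_eq_Bn S t
    set X := S t ∩ C with hX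
    have hA0sub : X ∪ below S t ⊆ C := by
      rw [hBt]
      exact union_subset inter_subset_right subset_union_right
    have hTX : S t \ X = T' := by
      rw [hX, hT']
      exact sdiff_inter_self_left (S t) C
    have hT'C : T' ∩ C = ∅ := sdiff_inter_self C (S t)
    have hγρ : γ ≤ decompDensity f g S t := hall t hnm
    have h1 : marginal g T' C ≤ marginal g T' (X ∪ below S t) :=
      marg_anti_ctx_sub hdm.g_submodular gmono hA0sub
    have h3 : decompDensity f g S t * marginal g T' (X ∪ below S t)
        ≤ marginal f T' (X ∪ below S t) := by
      have := key_subset hdm hdec t (Finset.inter_subset_left : S t ∩ C ⊆ S t)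
      rwa [hTX] at this
    have h4 : marginal f T' (X ∪ below S t) ≤ marginal f T' C :=
      marg_mono_ctx_super hdm.f_supermodular hdm.f_mono hA0sub
        (by rw [hT'C]; exact empty_subset _)
    have h2 : γ * marginal g T' (X ∪ below S t)
        ≤ decompDensity f g S t * marginal g T' (X ∪ below S t) :=
      mul_le_mul_of_nonneg_right hγρ (marg_nonneg gmono _ _)
    have h0 : γ * marginal g T' C ≤ γ * marginal g T' (X ∪ below S t) :=
      mul_le_mul_of_nonneg_left h1 hγ
    have ef : f (T' ∪ C) - f C = marginal f T' C := rfl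
    have eg : g (T' ∪ C) - g C = marginal g T' C := rfl
    rw [hC']
    have expand : γ * (g (T' ∪ C) - g W)
        = γ * (g (T' ∪ C) - g C) + γ * (g C - g W) := by ring
    rw [expand, eg]
    linarith

end AuxProof

/-- Theorem 1.2: the prefix `S_{≤i}` of the density decomposition,
consisting of all parts of density at least `γ`, maximizes `f(S) − γ·g(S)`;
in particular, for `γ = 1/α` it is an optimal agent response for contract `α`. -/
theorem optimal_contract_response (f g : Finset V → ℝ) (hdm : DualModular f g)
    {k : ℕ} (S : Fin k → Finset V) (hdec : IsDensityDecomposition f g S)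
    (γ : ℝ) (hγ : 0 ≤ γ) :
    (∀ T : Finset V,
      f T - γ * g T ≤
        f ((Finset.univ.filter (fun i => γ ≤ decompDensity f g S i)).biUnion S) -
          γ * g ((Finset.univ.filter (fun i => γ ≤ decompDensity f g S i)).biUnion S)) ∧
    (∀ α : ℝ, 0 < α → α ≤ 1 → γ = 1 / α →
      ∀ T : Finset V,
        α * f T - g T ≤
          α * f ((Finset.univ.filter (fun i => γ ≤ decompDensity f g S i)).biUnion S) -
            g ((Finset.univ.filter (fun i => γ ≤ decompDensity f g S i)).biUnion S)) := by
  classical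
  obtain ⟨m, hm, hIeq⟩ := prefix_ex hdm hdec γ
  set P := (Finset.univ.filter (fun i => γ ≤ decompDensity f g S i)).biUnion S with hPdef
  have hP : P = BnAux S m := by rw [hPdef, hIeq]; rfl
  have gmono : MonotoneFn g := mono_of_strictMono hdm.g_strictMono
  have hallρ : ∀ t : Fin k, (t : ℕ) < m → γ ≤ decompDensity f g S t := by
    intro t ht
    have hmem : t ∈ Finset.univ.filter (fun j : Fin k => (j : ℕ) < m) := by
      simp [ht]
    rw [← hIeq, mem_filter] at hmem
    exact hmem.2
  have hfirst : ∀ T : Finset V, f T - γ * g T ≤ f P - γ * g P := by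
    intro T
    have hA' := chain_ineq hdm hdec hγ hm hallρ (P ∩ T) m le_rfl
    have hPW : (P ∩ T) ∪ BnAux S m = P := by
      rw [← hP]
      exact union_eq_right.mpr inter_subset_left
    rw [hPW] at hA'
    have hsf := hdm.f_supermodular T P
    have hsg := hdm.g_submodular T P
    rw [inter_comm T P] at hsf hsg
    have hB : marginal f (T \ P) P ≤ γ * marginal g (T \ P) P := by
      rcases (T \ P).eq_empty_or_nonempty with he | hne
      · rw [he]
        unfold marginal
        rw [empty_union]
        simp
      · have hmk : m < k := by
          rcases lt_or_eq_of_le hm with h | h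
          · exact h
          · exfalso
            have : P = Finset.univ := by rw [hP, h]; exact Bn_univ hdec.cover
            rw [this, Finset.sdiff_eq_empty_iff_subset.mpr (Finset.subset_univ T)] at hne
            exact Finset.not_nonempty_empty hne
        have hρm : decompDensity f g S ⟨m, hmk⟩ < γ := by
          by_contra hge
          push_neg at hge
          have hmem : (⟨m, hmk⟩ : Fin k) ∈
              Finset.univ.filter (fun i => γ ≤ decompDensity f g S i) := by
            simp [hge]
          rw [hIeq, mem_filter] at hmem
          simp at hmem
        have hbel : below S (⟨m, hmk⟩ : Fin k) = P := by
          rw [below_eq_Bn, hP]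
        have hd : Disjoint (T \ P) P := sdiff_disjoint
        have hmax : margDensity f g (T \ P) (below S ⟨m, hmk⟩)
            ≤ decompDensity f g S ⟨m, hmk⟩ :=
          hdec.maxDensity ⟨m, hmk⟩ (T \ P) hne (by rw [hbel]; exact hd)
        rw [hbel] at hmax
        have hgpos : 0 < marginal g (T \ P) P := marg_pos hdm.g_strictMono hne hd
        have hdiv : marginal f (T \ P) P / marginal g (T \ P) P ≤ γ := by
          unfold margDensity at hmax
          exact le_of_lt (lt_of_le_of_lt hmax hρm)
        exact (div_le_iff₀ hgpos).mp hdiv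
    have hsd : (T \ P) ∪ P = T ∪ P := sdiff_union_self_eq_union
    have hBf : f (T ∪ P) - f P = marginal f (T \ P) P := by
      unfold marginal; rw [hsd]
    have hBg : g (T ∪ P) - g P = marginal g (T \ P) P := by
      unfold marginal; rw [hsd]
    have hB2 : f (T ∪ P) - f P ≤ γ * g (T ∪ P) - γ * g P := by
      rw [hBf]
      have : γ * g (T ∪ P) - γ * g P = γ * marginal g (T \ P) P := by
        unfold marginal; rw [hsd]; ring
      rw [this]
      exact hB
    have hsg2 : g (T ∪ P) + g (P ∩ T) ≤ g T + g P := by linarith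
    have m1 := mul_le_mul_of_nonneg_left hsg2 hγ
    rw [mul_add, mul_add] at m1
    rw [mul_sub] at hA'
    linarith
  refine ⟨fun T => hfirst T, ?_⟩
  intro α hα hα1 hγα T
  have h1 := hfirst T
  have hαγ : α * γ = 1 := by
    rw [hγα]
    field_simp
  have h2 : α * (f T - γ * g T) ≤ α * (f P - γ * g P) :=
    mul_le_mul_of_nonneg_left h1 hα.le
  have e1 : α * (f T - γ * g T) = α * f T - g T := by
    linear_combination (-(g T)) * hαγ
  have e2 : α * (f P - γ * g P) = α * f P - g P := by
    linear_combination (-(g P)) * hαγ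
  rw [e1, e2] at h2
  exact h2
end

section
/- Let (V; f, g) be a dual-modular instance with density decomposition V = S₁ ∪ … ∪ S_k and densities ρ₁ > … > ρ_k. Suppose γ ≥ 0 satisfies ρ_i > γ > ρ_{i+1} for some 0 ≤ i ≤ k, where by convention ρ₀ = +∞ and ρ_{k+1} = −∞. Then S_{≤i} = S₁ ∪ … ∪ S_i (with S_{≤0} = ∅) is the unique maximizer of f(S) − γ·g(S) over all S ⊆ V. -/
open Finset

variable {V : Type*} [Fintype V] [DecidableEq V]

/-- `S_{<j}` for a natural-number index `j`. -/
def belowN {k : ℕ} (S : Fin k → Finset V) (j : ℕ) : Finset V :=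
  (Finset.univ.filter (fun l : Fin k => (l : ℕ) < j)).biUnion S

lemma mem_belowN {k : ℕ} {S : Fin k → Finset V} {j : ℕ} {v : V} :
    v ∈ belowN S j ↔ ∃ l : Fin k, (l : ℕ) < j ∧ v ∈ S l := by
  simp [belowN]

lemma belowN_zero {k : ℕ} (S : Fin k → Finset V) : belowN S 0 = ∅ := by
  unfold belowN
  rw [Finset.filter_eq_empty_iff.mpr (fun _ _ => Nat.not_lt_zero _),
    Finset.biUnion_empty]

lemma belowN_succ {k : ℕ} (S : Fin k → Finset V) {j : ℕ} (hj : j < k) :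
    belowN S (j + 1) = S ⟨j, hj⟩ ∪ belowN S j := by
  ext v
  simp only [mem_belowN, Finset.mem_union]
  constructor
  · rintro ⟨l, hl, hv⟩
    rcases Nat.lt_succ_iff_lt_or_eq.mp hl with h | h
    · exact Or.inr ⟨l, h, hv⟩
    · have hl' : l = ⟨j, hj⟩ := Fin.ext h
      exact Or.inl (hl' ▸ hv)
  · rintro (hv | ⟨l, hl, hv⟩)
    · exact ⟨⟨j, hj⟩, Nat.lt_succ_self j, hv⟩
    · exact ⟨l, Nat.lt_succ_of_lt hl, hv⟩

lemma below_eq_belowN {k : ℕ} (S : Fin k → Finset V) (l : Fin k) :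
    below S l = belowN S (l : ℕ) := by
  ext v
  unfold below belowN
  simp only [Finset.mem_biUnion, Finset.mem_filter, Finset.mem_univ, true_and,
    Fin.lt_def]

lemma belowN_top {k : ℕ} {f g : Finset V → ℝ} {S : Fin k → Finset V}
    (hdec : IsDensityDecomposition f g S) : belowN S k = Finset.univ := by
  ext v
  simp only [Finset.mem_univ, iff_true, mem_belowN]
  have : v ∈ Finset.univ.biUnion S := by rw [hdec.cover]; exact Finset.mem_univ v
  obtain ⟨l, -, hv⟩ := Finset.mem_biUnion.mp this
  exact ⟨l, l.isLt, hv⟩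

lemma marg_g_pos {f g : Finset V → ℝ} (hdm : DualModular f g) {U A : Finset V}
    (hU : U.Nonempty) (hd : Disjoint U A) : 0 < marginal g U A := by
  obtain ⟨u, hu⟩ := hU
  have hss : A ⊂ U ∪ A := by
    refine ⟨Finset.subset_union_right, fun hsub => ?_⟩
    exact (Finset.disjoint_left.mp hd hu) (hsub (Finset.mem_union_left A hu))
  have := hdm.g_strictMono A (U ∪ A) hss
  simpa [marginal] using this

lemma marg_f_nonneg {f g : Finset V → ℝ} (hdm : DualModular f g) (U A : Finset V) :
    0 ≤ marginal f U A := by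
  have := hdm.f_mono A (U ∪ A) Finset.subset_union_right
  simpa [marginal] using this

lemma hsuper {f g : Finset V → ℝ} (hdm : DualModular f g) {γ : ℝ} (hγ : 0 ≤ γ)
    (A B : Finset V) :
    (f A - γ * g A) + (f B - γ * g B) ≤
      (f (A ∩ B) - γ * g (A ∩ B)) + (f (A ∪ B) - γ * g (A ∪ B)) := by
  have h1 := hdm.f_supermodular A B
  have h2 := hdm.g_submodular A B
  have h3 := mul_le_mul_of_nonneg_left h2 hγ
  nlinarith

/-- Key inductive claim: `B_j` strictly dominates all its proper subsets for the
objective `f - γ g`, provided all densities of the first `j` parts exceed `γ`. -/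
lemma claimB {f g : Finset V → ℝ} (hdm : DualModular f g)
    {k : ℕ} {S : Fin k → Finset V} (hdec : IsDensityDecomposition f g S)
    {γ : ℝ} (hγ : 0 ≤ γ) :
    ∀ j : ℕ, j ≤ k → (∀ l : Fin k, (l : ℕ) < j → γ < decompDensity f g S l) →
    ∀ C ⊆ belowN S j, C ≠ belowN S j →
      f C - γ * g C < f (belowN S j) - γ * g (belowN S j) := by
  intro j
  induction j with
  | zero =>
    intro _ _ C hC hne
    rw [belowN_zero] at hC hne
    exact absurd (Finset.subset_empty.mp hC) hne
  | succ j ih =>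
    intro hjk hup C hC hne
    have hj : j < k := hjk
    set jf : Fin k := ⟨j, hj⟩ with hjf
    set Bj := belowN S j with hBjdef
    set Sj := S jf with hSjdef
    have hsucc : belowN S (j + 1) = Sj ∪ Bj := belowN_succ S hj
    have hdisj : Disjoint Sj Bj := by
      have := hdec.disj jf
      rwa [below_eq_belowN] at this
    -- non-strict version of the induction hypothesis
    have ihle : ∀ C' ⊆ Bj, f C' - γ * g C' ≤ f Bj - γ * g Bj := by
      intro C' hC'
      by_cases h : C' = Bj
      · rw [h]
      · exact le_of_lt (ih hj.le (fun l hl => hup l (Nat.lt_succ_of_lt hl)) C' hC' h)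
    set D := C \ Bj with hDdef
    have hCsub : C ⊆ Sj ∪ Bj := hsucc ▸ hC
    have hDSj : D ⊆ Sj := by
      intro v hv
      have hv1 := Finset.mem_sdiff.mp hv
      rcases Finset.mem_union.mp (hCsub hv1.1) with h | h
      · exact h
      · exact absurd h hv1.2
    have hCBj : C ∪ Bj = D ∪ Bj := by
      rw [hDdef, Finset.sdiff_union_self_eq_union]
    -- density facts at level j
    have hγρ : γ < decompDensity f g S jf := hup jf (Nat.lt_succ_self j)
    set ρ := decompDensity f g S jf with hρdef
    have hgS : 0 < marginal g Sj Bj :=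
      marg_g_pos hdm (hdec.nonempty jf) hdisj
    have hρeq : ρ = marginal f Sj Bj / marginal g Sj Bj := by
      rw [hρdef]
      unfold decompDensity margDensity
      rw [below_eq_belowN]
    have hfS : marginal f Sj Bj = ρ * marginal g Sj Bj := by
      rw [hρeq, div_mul_cancel₀ _ (ne_of_gt hgS)]
    have hρ0 : 0 ≤ ρ := by
      rw [hρeq]
      exact div_nonneg (marg_f_nonneg hdm _ _) (le_of_lt hgS)
    have hDdisj : Disjoint D Bj := Finset.sdiff_disjoint
    have hfD : marginal f D Bj ≤ ρ * marginal g D Bj := by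
      by_cases hDne : D.Nonempty
      · have hgD : 0 < marginal g D Bj := marg_g_pos hdm hDne hDdisj
        have hmd := hdec.maxDensity jf D hDne (by rwa [below_eq_belowN])
        unfold margDensity at hmd
        have this : marginal f D Bj / marginal g D Bj ≤ ρ := by
          rw [hρeq]; exact hmd
        calc marginal f D Bj = (marginal f D Bj / marginal g D Bj) * marginal g D Bj := by
              rw [div_mul_cancel₀ _ (ne_of_gt hgD)]
          _ ≤ ρ * marginal g D Bj := by
              exact mul_le_mul_of_nonneg_right this (le_of_lt hgD)
      · have hDe : D = ∅ := Finset.not_nonempty_iff_eq_empty.mp hDne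
        simp [marginal, hDe]
    -- step 1: h C ≤ h (C ∪ Bj), with strictness tracking via C ∩ Bj
    have hstep1 : f C - γ * g C ≤ (f (C ∩ Bj) - γ * g (C ∩ Bj)) +
        (f (C ∪ Bj) - γ * g (C ∪ Bj)) - (f Bj - γ * g Bj) := by
      have := hsuper hdm hγ C Bj
      linarith
    by_cases hU : (Sj \ D).Nonempty
    · -- the remainder U = Sj \ D is nonempty: strict gain when completing to Bj₊₁
      have hUd : Disjoint (Sj \ D) (D ∪ Bj) := by
        rw [Finset.disjoint_union_right]
        exact ⟨Finset.sdiff_disjoint,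
          Finset.disjoint_of_subset_left (Finset.sdiff_subset) hdisj⟩
      have hgU : 0 < marginal g (Sj \ D) (D ∪ Bj) := marg_g_pos hdm hU hUd
      have hunion : (Sj \ D) ∪ (D ∪ Bj) = Sj ∪ Bj := by
        rw [← Finset.union_assoc, Finset.sdiff_union_self_eq_union,
          Finset.union_eq_left.mpr hDSj]
      have hgUeq : marginal g (Sj \ D) (D ∪ Bj) =
          marginal g Sj Bj - marginal g D Bj := by
        unfold marginal
        rw [hunion]; ring
      have hfUeq : marginal f (Sj \ D) (D ∪ Bj) =
          marginal f Sj Bj - marginal f D Bj := by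
        unfold marginal
        rw [hunion]; ring
      have hgUpos : 0 < marginal g Sj Bj - marginal g D Bj := hgUeq ▸ hgU
      have hkey : γ * (marginal g Sj Bj - marginal g D Bj) <
          marginal f Sj Bj - marginal f D Bj := by
        have h1 : ρ * (marginal g Sj Bj - marginal g D Bj) ≤
            marginal f Sj Bj - marginal f D Bj := by
          rw [hfS]; nlinarith
        nlinarith
      -- h (D ∪ Bj) < h (Sj ∪ Bj)
      have hstep2 : f (D ∪ Bj) - γ * g (D ∪ Bj) <
          f (Sj ∪ Bj) - γ * g (Sj ∪ Bj) := by
        have e1 : marginal f Sj Bj - marginal f D Bj =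
            f (Sj ∪ Bj) - f (D ∪ Bj) := by unfold marginal; ring
        have e2 : marginal g Sj Bj - marginal g D Bj =
            g (Sj ∪ Bj) - g (D ∪ Bj) := by unfold marginal; ring
        rw [e1, e2] at hkey
        linarith
      have hCint : f (C ∩ Bj) - γ * g (C ∩ Bj) ≤ f Bj - γ * g Bj :=
        ihle _ Finset.inter_subset_right
      rw [hsucc]
      rw [hCBj] at hstep1
      linarith
    · -- U empty: C ∪ Bj is everything, so C ∩ Bj must be a proper subset of Bj
      have hDeq : D = Sj := Finset.Subset.antisymm hDSj
        (Finset.sdiff_eq_empty_iff_subset.mp (Finset.not_nonempty_iff_eq_empty.mp hU))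
      have hCUnion : C ∪ Bj = Sj ∪ Bj := by rw [hCBj, hDeq]
      have hCint : C ∩ Bj ≠ Bj := by
        intro h
        apply hne
        have hBjC : Bj ⊆ C := by
          intro v hv
          rw [← h] at hv
          exact (Finset.mem_inter.mp hv).1
        have hSjC : Sj ⊆ C := hDeq ▸ Finset.sdiff_subset
        rw [hsucc]
        exact Finset.Subset.antisymm hCsub (Finset.union_subset hSjC hBjC)
      have hstrict : f (C ∩ Bj) - γ * g (C ∩ Bj) < f Bj - γ * g Bj :=
        ih hj.le (fun l hl => hup l (Nat.lt_succ_of_lt hl)) _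
          Finset.inter_subset_right hCint
      rw [hsucc, ← hCUnion]
      linarith

/-- if `ρ_i > γ > ρ_{i+1}`, then `S_{≤i}` is the unique maximizer of
`f(S) − γ·g(S)` over all subsets. -/
theorem unique_best_response (f g : Finset V → ℝ) (hdm : DualModular f g)
    {k : ℕ} (S : Fin k → Finset V) (hdec : IsDensityDecomposition f g S)
    (γ : ℝ) (hγ : 0 ≤ γ) (i : ℕ) (hik : i ≤ k)
    (hupper : ∀ j : Fin k, (j : ℕ) < i → γ < decompDensity f g S j)
    (hlower : ∀ j : Fin k, i ≤ (j : ℕ) → decompDensity f g S j < γ) :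
    ∀ T : Finset V,
      T ≠ (Finset.univ.filter (fun j : Fin k => (j : ℕ) < i)).biUnion S →
      f T - γ * g T <
        f ((Finset.univ.filter (fun j : Fin k => (j : ℕ) < i)).biUnion S) -
          γ * g ((Finset.univ.filter (fun j : Fin k => (j : ℕ) < i)).biUnion S) := by
  intro T hT
  have hB : (Finset.univ.filter (fun j : Fin k => (j : ℕ) < i)).biUnion S
      = belowN S i := rfl
  rw [hB] at hT ⊢
  set B := belowN S i with hBdef
  -- non-strict dominance of B over its subsets
  have hle : ∀ C ⊆ B, f C - γ * g C ≤ f B - γ * g B := by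
    intro C hC
    by_cases h : C = B
    · rw [h]
    · exact le_of_lt (claimB hdm hdec hγ i hik hupper C hC h)
  by_cases hTB : (T \ B).Nonempty
  · -- T has elements outside B; then i < k and the density bound at level i applies
    rcases lt_or_eq_of_le hik with hik' | hik'
    · set if' : Fin k := ⟨i, hik'⟩ with hif
      have hBeq : below S if' = B := below_eq_belowN S if'
      have hUd : Disjoint (T \ B) B := Finset.sdiff_disjoint
      have hρlt : decompDensity f g S if' < γ := hlower if' (le_refl i)
      have hgU : 0 < marginal g (T \ B) B := marg_g_pos hdm hTB hUd
      have hmd := hdec.maxDensity if' (T \ B) hTB (hBeq ▸ hUd)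
      rw [hBeq] at hmd
      unfold margDensity at hmd
      have hfU : marginal f (T \ B) B < γ * marginal g (T \ B) B := by
        have h1 : marginal f (T \ B) B ≤
            decompDensity f g S if' * marginal g (T \ B) B := by
          have h2 : marginal f (T \ B) B / marginal g (T \ B) B ≤
              decompDensity f g S if' := le_trans hmd (le_refl _)
          calc marginal f (T \ B) B
              = (marginal f (T \ B) B / marginal g (T \ B) B) * marginal g (T \ B) B := by
                rw [div_mul_cancel₀ _ (ne_of_gt hgU)]
            _ ≤ decompDensity f g S if' * marginal g (T \ B) B :=
                mul_le_mul_of_nonneg_right h2 (le_of_lt hgU)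
        nlinarith
      -- h (T ∪ B) < h B
      have hTU : (T \ B) ∪ B = T ∪ B := Finset.sdiff_union_self_eq_union
      have hstep : f (T ∪ B) - γ * g (T ∪ B) < f B - γ * g B := by
        have e1 : marginal f (T \ B) B = f (T ∪ B) - f B := by
          unfold marginal; rw [hTU]
        have e2 : marginal g (T \ B) B = g (T ∪ B) - g B := by
          unfold marginal; rw [hTU]
        rw [e1, e2] at hfU
        linarith
      have hint : f (T ∩ B) - γ * g (T ∩ B) ≤ f B - γ * g B :=
        hle _ Finset.inter_subset_right
      have hsup := hsuper hdm hγ T B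
      linarith
    · -- i = k : B = univ, contradiction with T \ B nonempty
      exfalso
      have : B = Finset.univ := by rw [hBdef, hik']; exact belowN_top hdec
      rw [this] at hTB
      have he : T \ Finset.univ = ∅ :=
        Finset.sdiff_eq_empty_iff_subset.mpr (Finset.subset_univ T)
      rw [he] at hTB
      exact Finset.not_nonempty_empty hTB
  · -- T ⊆ B, apply the strict claim directly
    have hTsub : T ⊆ B :=
      Finset.sdiff_eq_empty_iff_subset.mp (Finset.not_nonempty_iff_eq_empty.mp hTB)
    exact claimB hdm hdec hγ i hik hupper T hTsub hT
end
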